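/- arXiv:1907.01315 — 4 statements merged into one kernel-verified Lean document; each statement's English description precedes it below -/
import Mathlib

section
/- Let S ⊆ ℕ² be a local good semigroup and let T be a track of S. Then the good semigroup S' = S∖T satisfies g(S') = g(S)+1. -/
/-- The ambient space `ℤ²`; `ℕ²` is identified with the nonnegative orthant. -/
abbrev Z2 : Type := ℤ × ℤ

/-- The nonnegative orthant, representing `ℕ² ⊆ ℤ²`. -/
def orth : Set Z2 := {a : Z2 | 0 ≤ a.1 ∧ 0 ≤ a.2}

/-- Property (G1): closure under componentwise minimum. -/
def MinClosed (E : Set Z2) : Prop := ∀ a ∈ E, ∀ b ∈ E, a ⊓ b ∈ E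

/-- Property (G3). -/
def G3P (E : Set Z2) : Prop :=
  ∀ a ∈ E, ∀ b ∈ E, a ≠ b →
    (a.1 = b.1 →
      ∃ e ∈ E, a.1 < e.1 ∧ min a.2 b.2 ≤ e.2 ∧ (a.2 ≠ b.2 → e.2 = min a.2 b.2)) ∧
    (a.2 = b.2 →
      ∃ e ∈ E, a.2 < e.2 ∧ min a.1 b.1 ≤ e.1 ∧ (a.1 ≠ b.1 → e.1 = min a.1 b.1))

/-- A good semigroup of `ℕ²` (viewed inside `ℤ²`). -/
def IsGood (S : Set Z2) : Prop :=
  S ⊆ orth ∧ (0 : Z2) ∈ S ∧ (∀ a ∈ S, ∀ b ∈ S, a + b ∈ S) ∧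
  MinClosed S ∧ (∃ δ : Z2, ∀ y : Z2, δ ≤ y → y ∈ S) ∧ G3P S

/-- A good semigroup is local if its only element with a zero coordinate is `0`. -/
def IsLocal (S : Set Z2) : Prop := ∀ a ∈ S, (a.1 = 0 ∨ a.2 = 0) → a = 0

/-- A relative good ideal of `S`. -/
def IsRelGoodIdeal (S E : Set Z2) : Prop :=
  E.Nonempty ∧ (∀ e ∈ E, ∀ s ∈ S, e + s ∈ E) ∧ (∃ a ∈ S, ∀ e ∈ E, a + e ∈ S) ∧
  MinClosed E ∧ G3P E

/-- A saturated chain of length `n` in `E`. -/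
def IsSatChain (E : Set Z2) (n : ℕ) (f : ℕ → Z2) : Prop :=
  (∀ i ≤ n, f i ∈ E) ∧ (∀ i < n, f i < f (i + 1)) ∧
  (∀ i < n, ∀ c ∈ E, ¬ (f i < c ∧ c < f (i + 1)))

/-- `d_E(a,b)`: the common length of all saturated chains in `E` from `a` to `b`. -/
noncomputable def chainDist (E : Set Z2) (a b : Z2) : ℕ :=
  sSup {n : ℕ | ∃ f : ℕ → Z2, IsSatChain E n f ∧ f 0 = a ∧ f n = b}

/-- The (componentwise) minimal element `e(E)` of `E`. -/
noncomputable def minEl (E : Set Z2) : Z2 :=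
  (sInf (Prod.fst '' E), sInf (Prod.snd '' E))

/-- The distance `d(E∖F)` between `F ⊆ E`: the common value of
`d_E(e(E),α) - d_F(e(F),α)` for all sufficiently large `α ∈ F`. -/
noncomputable def dist2 (E F : Set Z2) : ℤ :=
  sSup {z : ℤ | ∃ β : Z2, ∀ α ∈ F, β ≤ α →
    (chainDist E (minEl E) α : ℤ) - (chainDist F (minEl F) α : ℤ) = z}

/-- The conductor `c(E)`: the componentwise minimal `δ` with `δ + ℕ² ⊆ E`. -/
noncomputable def condE (E : Set Z2) : Z2 :=
  (sInf ((fun δ : Z2 => δ.1) '' {δ : Z2 | ∀ y : Z2, δ ≤ y → y ∈ E}),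
   sInf ((fun δ : Z2 => δ.2) '' {δ : Z2 | ∀ y : Z2, δ ≤ y → y ∈ E}))

/-- The conductor ideal `C(E) = {β ∈ E : β ≥ c(E)}`. -/
noncomputable def CIdeal (E : Set Z2) : Set Z2 := {b ∈ E | condE E ≤ b}

/-- The length `l(E) = d(E ∖ C(E))`. -/
noncomputable def glen (E : Set Z2) : ℤ := dist2 E (CIdeal E)

/-- The genus `g(E) = d(ℕ² ∖ E)`. -/
noncomputable def genus (E : Set Z2) : ℤ := dist2 orth E

/-- The good semigroup `ℕ²(1,1) = {0} ∪ ((1,1) + ℕ²)`. -/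
def N2oneone : Set Z2 := {a : Z2 | a = 0 ∨ ((1 : ℤ), (1 : ℤ)) ≤ a}
/-- The space `(ℕ ∪ {∞})²`, modelled inside `(ℤ ∪ {∞})²`. -/
abbrev Om : Type := WithTop ℤ × WithTop ℤ

/-- The embedding of `ℤ²` into `(ℤ ∪ {∞})²`. -/
def iotaZ (a : Z2) : Om := ((a.1 : WithTop ℤ), (a.2 : WithTop ℤ))

/-- `S^∞`: the elements `(a,∞)` with `(a,c₂) ∈ S` and `(∞,b)` with `(c₁,b) ∈ S`,
where `(c₁,c₂)` is the conductor of `S`. -/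
noncomputable def Sinf (S : Set Z2) : Set Om :=
  {w : Om | (∃ a : ℤ, w = ((a : WithTop ℤ), ⊤) ∧ (a, (condE S).2) ∈ S) ∨
            (∃ b : ℤ, w = (⊤, (b : WithTop ℤ)) ∧ ((condE S).1, b) ∈ S)}

/-- `Γ_S = S ∪ S^∞`. -/
noncomputable def Gam (S : Set Z2) : Set Om := iotaZ '' S ∪ Sinf S

/-- `I(S)`: the set of irreducible elements of `Γ_S`. -/
noncomputable def ISet (S : Set Z2) : Set Om :=
  {w ∈ Gam S | w ≠ 0 ∧ ∀ b ∈ Gam S, ∀ c ∈ Gam S, w = b + c → w = b ∨ w = c}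

/-- `Δ(a) = Δ₁(a) ∪ Δ₂(a)` for a finite element `a ∈ ℤ²`. -/
def DeltaUp (a : Z2) : Set Z2 :=
  {b : Z2 | (b.1 = a.1 ∧ a.2 < b.2) ∨ (b.2 = a.2 ∧ a.1 < b.1)}

/-- `A_f(S)`: the finite maximals of `S`, i.e. `a ∈ S` with `Δ^S(a) = ∅`. -/
def Af (S : Set Z2) : Set Z2 := {a ∈ S | S ∩ DeltaUp a = ∅}

/-- `I_A(S)`: the irreducible maximals, i.e. irreducible elements of
`A(S) = A_f(S) ∪ S^∞`. -/
noncomputable def IA (S : Set Z2) : Set Om := ISet S ∩ (iotaZ '' Af S ∪ Sinf S)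

/-- `₁Δ(w)` (as a subset of `ℤ²`), including the conventions for infinite `w`. -/
def lowD1 (w : Om) : Set Z2 :=
  {b : Z2 | (b.1 : WithTop ℤ) = w.1 ∧ (b.2 : WithTop ℤ) < w.2}

/-- `₂Δ(w)` (as a subset of `ℤ²`), including the conventions for infinite `w`. -/
def lowD2 (w : Om) : Set Z2 :=
  {b : Z2 | (b.2 : WithTop ℤ) = w.2 ∧ (b.1 : WithTop ℤ) < w.1}

/-- `Δ(w)` (as a subset of `ℤ²`) for a possibly infinite `w`. -/
def upD (w : Om) : Set Z2 :=
  {b : Z2 | ((b.1 : WithTop ℤ) = w.1 ∧ w.2 < (b.2 : WithTop ℤ)) ∨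
            ((b.2 : WithTop ℤ) = w.2 ∧ w.1 < (b.1 : WithTop ℤ))}

/-- `{w} ∩ ℤ²`: the singleton of `w` if `w` is finite, `∅` otherwise. -/
def finPart (w : Om) : Set Z2 := {b : Z2 | iotaZ b = w}

/-- `a` and `b` are connected by a piece of track. -/
def Piece (S : Set Z2) (a b : Om) : Prop :=
  ¬ a ≤ b ∧ ¬ b ≤ a ∧ ∀ s ∈ S, s ∈ upD (a ⊓ b) → iotaZ s ∈ ISet S

/-- The data `α 0, …, α (n-1)` of a track of `S` (with `n ≥ 1` points;
`n = 1` gives the one-point tracks `T((α))`). -/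
def TrackData (S : Set Z2) (n : ℕ) (α : ℕ → Om) : Prop :=
  1 ≤ n ∧ (∀ i < n, α i ∈ IA S) ∧
  (∀ i j, i < j → j < n → (α i).1 < (α j).1) ∧
  (∀ s ∈ S, s ∈ lowD2 (α 0) → iotaZ s ∈ ISet S) ∧
  (∀ s ∈ S, s ∈ lowD1 (α (n - 1)) → iotaZ s ∈ ISet S) ∧
  (∀ i, i + 1 < n → Piece S (α i) (α (i + 1)))

/-- The track `T((α 0,…,α (n-1)))` as a subset of `S`. -/
def trackSet (S : Set Z2) (n : ℕ) (α : ℕ → Om) : Set Z2 :=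
  finPart (α 0) ∪ S ∩ lowD2 (α 0) ∪
  (⋃ i ∈ Finset.range (n - 1), S ∩ upD (α i ⊓ α (i + 1))) ∪
  S ∩ lowD1 (α (n - 1)) ∪ finPart (α (n - 1))

/-- `T` is a track of `S`. -/
def IsTrack (S T : Set Z2) : Prop :=
  ∃ (n : ℕ) (α : ℕ → Om), TrackData S n α ∧ T = trackSet S n α

/-- `T` is a beyond track of `S`: a track meeting `{a ∈ S : a ≥ c(S)}`. -/
noncomputable def IsBeyondTrack (S T : Set Z2) : Prop :=
  IsTrack S T ∧ (T ∩ {a ∈ S | condE S ≤ a}).Nonempty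

/-- `S` is a special parent of `S'`: `S` is a (local) good semigroup and
`S' = S ∖ T` for some beyond track `T` of `S`. -/
noncomputable def SpecialParent (S S' : Set Z2) : Prop :=
  IsGood S ∧ IsLocal S ∧ ∃ T : Set Z2, IsBeyondTrack S T ∧ S' = S \ T

/-!
For `E ⊆ ℕ²` containing `0` and a translate of `ℕ²`, the quantity `a₁ + a₂ - d_E(0, a)` is
eventually constant, equal to `g(E)`; so it suffices to show `d_S(0, A) = d_{S∖T}(0, A) + 1` for
one large `A`. A track is a staircase: the points of `S` on the vertical and horizontal legs of
its vertices, which are maximals of `S`. A longest chain of `S` from `0` to `A` meets `T` in a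
block lying on one column or one row, and (G1) and (G3) replace it by a parallel chain off the
track with one point fewer. Conversely, a longest chain of `S ∖ T` is not saturated in `S`: a
saturated chain of `S` starting below the track and ending beyond it must meet it.
-/

def coordSum (a : Z2) : ℤ := a.1 + a.2

lemma coordSum_lt_coordSum {a b : Z2} (h : a < b) : coordSum a < coordSum b := by
  unfold coordSum
  rcases Prod.lt_iff.1 h with ⟨h1, h2⟩ | ⟨h1, h2⟩ <;> omega

inductive HasChain (E : Set Z2) : ℕ → Z2 → Z2 → Prop
  | refl {a : Z2} : a ∈ E → HasChain E 0 a a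
  | cons {n : ℕ} {a b c : Z2} : a ∈ E → a < b → HasChain E n b c → HasChain E (n + 1) a c

namespace HasChain

variable {E F : Set Z2} {n m : ℕ} {a b c : Z2}

lemma mem_left (h : HasChain E n a b) : a ∈ E := by
  cases h <;> assumption

lemma mem_right (h : HasChain E n a b) : b ∈ E := by
  induction h <;> assumption

lemma le (h : HasChain E n a b) : a ≤ b := by
  induction h with
  | refl => exact le_rfl
  | cons _ hab _ ih => exact hab.le.trans ih

lemma coordSum_add_le (h : HasChain E n a b) : coordSum a + n ≤ coordSum b := by
  induction h with
  | refl => simp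
  | cons _ hab _ ih => have := coordSum_lt_coordSum hab; push_cast; omega

lemma eq_of_zero (h : HasChain E 0 a b) : a = b := by
  cases h; rfl

lemma exists_of_succ (h : HasChain E (n + 1) a c) : ∃ b, a ∈ E ∧ a < b ∧ HasChain E n b c := by
  cases h with
  | cons ha hab h => exact ⟨_, ha, hab, h⟩

lemma trans (h₁ : HasChain E n a b) (h₂ : HasChain E m b c) : HasChain E (n + m) a c := by
  induction h₁ with
  | refl => simpa using h₂
  | cons ha hab _ ih => rw [Nat.add_right_comm]; exact cons ha hab (ih h₂)

lemma mono (h : HasChain E n a b) (hEF : E ⊆ F) : HasChain F n a b := by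
  induction h with
  | refl ha => exact refl (hEF ha)
  | cons ha hab _ ih => exact cons (hEF ha) hab ih

lemma swap (h : HasChain E n a b) : HasChain (Prod.swap ⁻¹' E) n a.swap b.swap := by
  induction h with
  | refl ha => exact refl (by simpa using ha)
  | cons ha hab _ ih => exact cons (by simpa using ha) (Prod.swap_lt_swap.2 hab) ih

lemma of_fn {f : ℕ → Z2} {i j : ℕ} (hij : i ≤ j) (hmem : ∀ l, i ≤ l → l ≤ j → f l ∈ E)
    (hlt : ∀ l, i ≤ l → l < j → f l < f (l + 1)) : HasChain E (j - i) (f i) (f j) := by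
  obtain ⟨d, rfl⟩ := Nat.exists_eq_add_of_le hij
  rw [Nat.add_sub_cancel_left]
  induction d generalizing i with
  | zero => exact refl (hmem i le_rfl (by omega))
  | succ d ih =>
    have h := ih (i := i + 1) (by omega) (fun l h1 h2 => hmem l (by omega) (by omega))
      (fun l h1 h2 => hlt l (by omega) (by omega))
    rw [show i + 1 + d = i + (d + 1) by omega] at h
    exact cons (hmem i le_rfl (by omega)) (hlt i le_rfl (by omega)) h

lemma exists_fn (h : HasChain E n a b) :
    ∃ f : ℕ → Z2, (∀ i ≤ n, f i ∈ E) ∧ (∀ i < n, f i < f (i + 1)) ∧ f 0 = a ∧ f n = b := by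
  induction h with
  | @refl a ha =>
    exact ⟨fun _ => a, fun _ _ => ha, fun _ h => absurd h (Nat.not_lt_zero _), rfl, rfl⟩
  | @cons n a b c ha hab _ ih =>
    obtain ⟨f, hmem, hlt, rfl, rfl⟩ := ih
    refine ⟨fun | 0 => a | i + 1 => f i, ?_, ?_, rfl, rfl⟩
    · rintro (_ | i) hi
      exacts [ha, hmem i (by omega)]
    · rintro (_ | i) hi
      exacts [hab, hlt i (by omega)]

end HasChain

section ChainDist

variable {E : Set Z2} {n : ℕ} {a b : Z2}

lemma hasChain_succ_of_between {f : ℕ → Z2} (hmem : ∀ i ≤ n, f i ∈ E)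
    (hlt : ∀ i < n, f i < f (i + 1)) {i : ℕ} (hi : i < n) {c : Z2} (hc : c ∈ E)
    (h₁ : f i < c) (h₂ : c < f (i + 1)) : HasChain E (n + 1) (f 0) (f n) := by
  have hpre := HasChain.of_fn (Nat.zero_le i) (fun l _ hl => hmem l (by omega))
    (fun l _ hl => hlt l (by omega))
  have hpost := HasChain.of_fn (Nat.succ_le_of_lt hi) (fun l _ hl => hmem l hl)
    (fun l _ hl => hlt l hl)
  have h := hpre.trans (.cons (hmem i hi.le) h₁ (.cons hc h₂ hpost))
  rwa [show i - 0 + (n - (i + 1) + 1 + 1) = n + 1 by omega] at h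

lemma HasChain.exists_isSatChain (h : HasChain E n a b) :
    ∃ m, n ≤ m ∧ ∃ f, IsSatChain E m f ∧ f 0 = a ∧ f m = b := by
  suffices ∀ (k n : ℕ), (coordSum b - coordSum a - n).toNat = k → HasChain E n a b →
      ∃ m, n ≤ m ∧ ∃ f, IsSatChain E m f ∧ f 0 = a ∧ f m = b from this _ n rfl h
  intro k
  induction k using Nat.strong_induction_on with
  | _ k ih =>
    intro n hk h
    obtain ⟨f, hmem, hlt, rfl, rfl⟩ := h.exists_fn
    by_cases hsat : ∀ i < n, ∀ c ∈ E, ¬(f i < c ∧ c < f (i + 1))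
    · exact ⟨n, le_rfl, f, ⟨hmem, hlt, hsat⟩, rfl, rfl⟩
    push Not at hsat
    obtain ⟨i, hi, c, hc, h₁, h₂⟩ := hsat
    have h' := hasChain_succ_of_between hmem hlt hi hc h₁ h₂
    have := h'.coordSum_add_le
    obtain ⟨m, hm, hm'⟩ := ih _ (by omega) (n + 1) rfl h'
    exact ⟨m, by omega, hm'⟩

lemma IsSatChain.hasChain {f : ℕ → Z2} (hf : IsSatChain E n f) : HasChain E n (f 0) (f n) := by
  simpa using HasChain.of_fn (Nat.zero_le n) (fun l _ hl => hf.1 l hl) fun l _ hl => hf.2.1 l hl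

lemma bddAbove_satChainLengths :
    BddAbove {n : ℕ | ∃ f : ℕ → Z2, IsSatChain E n f ∧ f 0 = a ∧ f n = b} := by
  refine ⟨(coordSum b - coordSum a).toNat, ?_⟩
  rintro n ⟨f, hf, rfl, rfl⟩
  have := (IsSatChain.hasChain hf).coordSum_add_le
  omega

lemma HasChain.le_chainDist (h : HasChain E n a b) : n ≤ chainDist E a b := by
  obtain ⟨m, hnm, f, hf, rfl, rfl⟩ := h.exists_isSatChain
  exact hnm.trans (le_csSup bddAbove_satChainLengths ⟨f, hf, rfl, rfl⟩)

lemma HasChain.exists_isSatChain_chainDist (h : HasChain E n a b) :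
    ∃ f, IsSatChain E (chainDist E a b) f ∧ f 0 = a ∧ f (chainDist E a b) = b := by
  obtain ⟨m, -, f, hf, rfl, rfl⟩ := h.exists_isSatChain
  exact Nat.sSup_mem (s := {n | ∃ f, IsSatChain E n f ∧ f 0 = _ ∧ f n = _}) ⟨m, f, hf, rfl, rfl⟩
    bddAbove_satChainLengths

lemma HasChain.chainDist_le (h : HasChain E n a b) :
    coordSum a + chainDist E a b ≤ coordSum b := by
  obtain ⟨f, hf, h0, h1⟩ := h.exists_isSatChain_chainDist
  simpa [h0, h1] using (IsSatChain.hasChain hf).coordSum_add_le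

lemma exists_hasChain_of_le (hab : a ≤ b) (ha : a ∈ E) (hb : b ∈ E) : ∃ n, HasChain E n a b := by
  rcases hab.eq_or_lt with rfl | hlt
  exacts [⟨0, .refl ha⟩, ⟨1, .cons ha hlt (.refl hb)⟩]

lemma hasChain_of_box (hbox : ∀ y, a ≤ y → y ≤ b → y ∈ E) (hab : a ≤ b)
    (hn : coordSum a + n = coordSum b) : HasChain E n a b := by
  induction n generalizing a with
  | zero =>
    obtain ⟨h1, h2⟩ := Prod.le_def.1 hab
    have : a = b := Prod.ext (by unfold coordSum at hn; omega) (by unfold coordSum at hn; omega)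
    exact this ▸ .refl (hbox a le_rfl hab)
  | succ n ih =>
    obtain ⟨h1, h2⟩ := Prod.le_def.1 hab
    obtain ⟨a', haa', ha'b, hsum⟩ : ∃ a', a < a' ∧ a' ≤ b ∧ coordSum a' = coordSum a + 1 := by
      unfold coordSum at hn ⊢
      by_cases h : a.1 < b.1
      · exact ⟨(a.1 + 1, a.2), Prod.lt_iff.2 (.inl ⟨by simp, le_rfl⟩),
          Prod.le_def.2 ⟨by simp; omega, h2⟩, by simp; ring⟩
      · exact ⟨(a.1, a.2 + 1), Prod.lt_iff.2 (.inr ⟨le_rfl, by simp⟩),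
          Prod.le_def.2 ⟨h1, by simp; omega⟩, by simp; ring⟩
    exact .cons (hbox a le_rfl hab) haa'
      (ih (fun y h₁ h₂ => hbox y (haa'.le.trans h₁) h₂) ha'b (by push_cast at hn; omega))

end ChainDist

section Genus

lemma minEl_eq_zero {E : Set Z2} (hE : E ⊆ orth) (h0 : (0 : Z2) ∈ E) : minEl E = 0 := by
  have key : ∀ g : Z2 → ℤ, (∀ a ∈ E, 0 ≤ g a) → g 0 = 0 → sInf (g '' E) = 0 := fun g hg hg0 =>
    le_antisymm (csInf_le ⟨0, by rintro _ ⟨a, ha, rfl⟩; exact hg a ha⟩ ⟨0, h0, hg0⟩)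
      (le_csInf ⟨0, 0, h0, hg0⟩ (by rintro _ ⟨a, ha, rfl⟩; exact hg a ha))
  exact Prod.ext (key Prod.fst (fun a ha => (hE ha).1) rfl)
    (key Prod.snd (fun a ha => (hE ha).2) rfl)

lemma chainDist_orth {a : Z2} (ha : a ∈ orth) : (chainDist orth 0 a : ℤ) = coordSum a := by
  have h : HasChain orth (coordSum a).toNat 0 a :=
    hasChain_of_box (fun y hy _ => ⟨hy.1, hy.2⟩) (Prod.le_def.2 ⟨ha.1, ha.2⟩)
      (by have := ha.1; have := ha.2; simp [coordSum]; omega)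
  have h₁ := h.le_chainDist
  have h₂ := h.chainDist_le
  simp only [coordSum, Prod.fst_zero, Prod.snd_zero] at h₁ h₂ ⊢
  omega

lemma dist2_eq {E F : Set Z2} {z : ℤ} (hF : ∀ β, ∃ a ∈ F, β ≤ a) {β : Z2}
    (hβ : ∀ a ∈ F, β ≤ a → (chainDist E (minEl E) a : ℤ) - chainDist F (minEl F) a = z) :
    dist2 E F = z := by
  have : {z' : ℤ | ∃ β : Z2, ∀ a ∈ F, β ≤ a →
      (chainDist E (minEl E) a : ℤ) - chainDist F (minEl F) a = z'} = {z} := by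
    refine Set.eq_singleton_iff_unique_mem.2 ⟨⟨β, hβ⟩, ?_⟩
    rintro z' ⟨β', hβ'⟩
    obtain ⟨a, ha, hle⟩ := hF (β ⊔ β')
    exact (hβ' a ha (le_sup_right.trans hle)).symm.trans (hβ a ha (le_sup_left.trans hle))
  rw [dist2, this, csSup_singleton]

/-- `coordSum a - d_E(0, a)` is nonnegative and antitone beyond the conductor, hence eventually
constant; that constant is the genus. -/
lemma exists_genus_eq {E : Set Z2} (hE : E ⊆ orth) (h0 : (0 : Z2) ∈ E) {δ : Z2}
    (hδ : ∀ y, δ ≤ y → y ∈ E) :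
    ∃ β, ∀ a, β ≤ a → genus E = coordSum a - chainDist E 0 a := by
  set g : Z2 → ℤ := fun a => coordSum a - chainDist E 0 a with hg
  have hchain : ∀ a, δ ⊔ 0 ≤ a → ∃ n, HasChain E n 0 a := fun a ha =>
    exists_hasChain_of_le (le_sup_right.trans ha) h0 (hδ a (le_sup_left.trans ha))
  have hg_nonneg : ∀ a, δ ⊔ 0 ≤ a → 0 ≤ g a := by
    intro a ha
    obtain ⟨n, h⟩ := hchain a ha
    have := h.chainDist_le
    simp only [hg, coordSum, Prod.fst_zero, Prod.snd_zero] at this ⊢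
    omega
  have hg_anti : ∀ a b, δ ⊔ 0 ≤ a → a ≤ b → g b ≤ g a := by
    intro a b ha hab
    obtain ⟨n, h⟩ := hchain a ha
    obtain ⟨f, hf, hf0, hfa⟩ := h.exists_isSatChain_chainDist
    have hsum : coordSum a ≤ coordSum b := by
      have := Prod.le_def.1 hab; unfold coordSum; omega
    have hbox : HasChain E (coordSum b - coordSum a).toNat a b :=
      hasChain_of_box (fun y hy _ => hδ y (le_sup_left.trans (ha.trans hy))) hab (by omega)
    have hsat := IsSatChain.hasChain hf
    rw [hf0, hfa] at hsat
    have := (hsat.trans hbox).le_chainDist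
    simp only [hg]
    omega
  obtain ⟨_, ⟨β, hβ, rfl⟩, hmin⟩ := Int.exists_least_of_bdd
    (P := fun z => ∃ a, δ ⊔ 0 ≤ a ∧ g a = z)
    ⟨0, by rintro _ ⟨a, ha, rfl⟩; exact hg_nonneg a ha⟩ ⟨_, δ ⊔ 0, le_rfl, rfl⟩
  have hconst : ∀ a, β ≤ a → g a = g β := fun a ha =>
    le_antisymm (hg_anti β a hβ ha) (hmin _ ⟨a, hβ.trans ha, rfl⟩)
  refine ⟨β, fun a ha => ?_⟩
  change genus E = g a
  rw [hconst a ha, genus]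
  refine dist2_eq (fun β' => ⟨β' ⊔ δ, hδ _ le_sup_right, le_sup_left⟩) (β := β)
    fun a' ha' hβa' => ?_
  rw [minEl_eq_zero subset_rfl ⟨le_rfl, le_rfl⟩, minEl_eq_zero hE h0, chainDist_orth (hE ha'),
    ← hconst a' hβa']

end Genus

section Good

variable {S : Set Z2}

lemma G3P.exists_fst_lt (h : G3P S) {a b : Z2} (ha : a ∈ S) (hb : b ∈ S) (h₁ : a.1 = b.1)
    (h₂ : a.2 < b.2) : ∃ e ∈ S, a.1 < e.1 ∧ e.2 = a.2 := by
  obtain ⟨e, he, h₃, -, h₄⟩ := (h a ha b hb (fun h => by simp [h] at h₂)).1 h₁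
  exact ⟨e, he, h₃, by rw [h₄ h₂.ne]; exact min_eq_left h₂.le⟩

lemma G3P.exists_snd_lt (h : G3P S) {a b : Z2} (ha : a ∈ S) (hb : b ∈ S) (h₂ : a.2 = b.2)
    (h₁ : a.1 < b.1) : ∃ e ∈ S, a.2 < e.2 ∧ e.1 = a.1 := by
  obtain ⟨e, he, h₃, -, h₄⟩ := (h a ha b hb (fun h => by simp [h] at h₁)).2 h₂
  exact ⟨e, he, h₃, by rw [h₄ h₁.ne]; exact min_eq_left h₁.le⟩

lemma MinClosed.preimage_swap (h : MinClosed S) : MinClosed (Prod.swap ⁻¹' S) :=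
  fun a ha b hb => by simpa [Prod.swap_inf] using h _ ha _ hb

lemma G3P.preimage_swap (h : G3P S) : G3P (Prod.swap ⁻¹' S) := by
  intro a ha b hb hab
  obtain ⟨h₁, h₂⟩ := h a.swap ha b.swap hb (by simpa using hab)
  refine ⟨fun h => ?_, fun h => ?_⟩
  · obtain ⟨e, he, h⟩ := h₂ h
    exact ⟨e.swap, by simpa using he, h⟩
  · obtain ⟨e, he, h⟩ := h₁ h
    exact ⟨e.swap, by simpa using he, h⟩

lemma IsLocal.preimage_swap (h : IsLocal S) : IsLocal (Prod.swap ⁻¹' S) := fun a ha h0 => by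
  simpa [Prod.ext_iff, and_comm] using h a.swap ha h0.symm

lemma IsGood.mem_of_condE_le (hS : IsGood S) {y : Z2} (hy : condE S ≤ y) : y ∈ S := by
  obtain ⟨hSorth, -, -, hmin, hδ, -⟩ := hS
  set K : Set Z2 := {δ | ∀ y, δ ≤ y → y ∈ S}
  have hK : K.Nonempty := hδ
  have hbdd₁ : BddBelow ((fun δ : Z2 => δ.1) '' K) := ⟨0, by
    rintro _ ⟨δ, hδ, rfl⟩
    exact (hSorth (hδ (δ.1, max δ.2 0) ⟨le_rfl, le_max_left _ _⟩)).1⟩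
  have hbdd₂ : BddBelow ((fun δ : Z2 => δ.2) '' K) := ⟨0, by
    rintro _ ⟨δ, hδ, rfl⟩
    exact (hSorth (hδ (max δ.1 0, δ.2) ⟨le_max_left _ _, le_rfl⟩)).2⟩
  obtain ⟨δa, hδa, ha⟩ := Int.csInf_mem (hK.image _) hbdd₁
  obtain ⟨δb, hδb, hb⟩ := Int.csInf_mem (hK.image _) hbdd₂
  have hinf : δa ⊓ δb ∈ K := fun y hy => by
    have := hmin _ (hδa (y ⊔ δa) le_sup_right) _ (hδb (y ⊔ δb) le_sup_right)
    rwa [← sup_inf_left, sup_eq_left.2 hy] at this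
  have hle : δa ⊓ δb ≤ condE S := by
    refine ⟨?_, ?_⟩
    · show min δa.1 δb.1 ≤ sInf ((fun δ : Z2 => δ.1) '' K)
      exact ha ▸ min_le_left _ _
    · show min δa.2 δb.2 ≤ sInf ((fun δ : Z2 => δ.2) '' K)
      exact hb ▸ min_le_right _ _
  exact hinf y (hle.trans hy)

/-- (G3) applied to `(a, y)` and a point of the conductor region to its right in the same row
gives a point of `S` above `(a, y)` in its column. -/
lemma exists_snd_gt_of_mem (hG3 : G3P S) {δ : Z2} (hδ : ∀ y, δ ≤ y → y ∈ S) {a : ℤ}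
    (ha : (a, δ.2) ∈ S) (N : ℤ) : ∃ y, N < y ∧ (a, y) ∈ S := by
  have step : ∀ y, δ.2 ≤ y → (a, y) ∈ S → ∃ y', y < y' ∧ (a, y') ∈ S := by
    intro y hy hay
    obtain ⟨e, he, h₁, h₂⟩ :=
      hG3.exists_snd_lt hay (hδ (max δ.1 (a + 1), y) ⟨le_max_left _ _, hy⟩) rfl
        (lt_max_of_lt_right (lt_add_one a))
    exact ⟨e.2, h₁, by rwa [show (a, e.2) = e from Prod.ext h₂.symm rfl]⟩
  have : ∀ k : ℕ, ∃ y, δ.2 + k ≤ y ∧ (a, y) ∈ S := by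
    intro k
    induction k with
    | zero => exact ⟨δ.2, by simp, ha⟩
    | succ k ih =>
      obtain ⟨y, hy, hay⟩ := ih
      obtain ⟨y', hy', hay'⟩ := step y (by omega) hay
      exact ⟨y', by push_cast; omega, hay'⟩
  obtain ⟨y, hy, hay⟩ := this (N + 1 - δ.2).toNat
  exact ⟨y, by omega, hay⟩

lemma exists_fst_gt_of_mem (hG3 : G3P S) {δ : Z2} (hδ : ∀ y, δ ≤ y → y ∈ S) {b : ℤ}
    (hb : (δ.1, b) ∈ S) (N : ℤ) : ∃ x, N < x ∧ (x, b) ∈ S :=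
  exists_snd_gt_of_mem hG3.preimage_swap (δ := δ.swap)
    (fun y hy => hδ y.swap (by simpa using Prod.swap_le_swap.2 hy)) hb N

end Good

section MaxPoint

variable {S : Set Z2} {w : Om}

lemma snd_le_of_mem_Af {p s : Z2} (hp : p ∈ Af S) (hs : s ∈ S) (h : s.1 = p.1) : s.2 ≤ p.2 := by
  by_contra! hlt
  exact (Set.eq_empty_iff_forall_notMem.1 hp.2) s ⟨hs, .inl ⟨h, hlt⟩⟩

lemma swap_mem_Af {p : Z2} (hp : p ∈ Af S) : p.swap ∈ Af (Prod.swap ⁻¹' S) := by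
  refine ⟨by simpa using hp.1, Set.eq_empty_iff_forall_notMem.2 fun s ⟨hs, hsp⟩ => ?_⟩
  refine (Set.eq_empty_iff_forall_notMem.1 hp.2) s.swap ⟨hs, ?_⟩
  simp only [DeltaUp, Set.mem_ofPred_eq, Prod.fst_swap, Prod.snd_swap] at hsp ⊢
  exact hsp.symm

/-- The points of `A(S) = A_f(S) ∪ S^∞`, except that for an infinite point the condition of
`S^∞` (a point of `S` on the conductor's row or column) is replaced by the unboundedness of
the corresponding column or row of `S`. -/
def IsMaxPoint (S : Set Z2) (w : Om) : Prop :=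
  (∃ p ∈ Af S, w = iotaZ p) ∨
  (∃ a : ℤ, w = ((a : WithTop ℤ), ⊤) ∧ ∀ N : ℤ, ∃ y, N < y ∧ (a, y) ∈ S) ∨
  (∃ b : ℤ, w = (⊤, (b : WithTop ℤ)) ∧ ∀ N : ℤ, ∃ x, N < x ∧ (x, b) ∈ S)

lemma IsMaxPoint.swap (hw : IsMaxPoint S w) : IsMaxPoint (Prod.swap ⁻¹' S) w.swap := by
  rcases hw with ⟨p, hp, rfl⟩ | ⟨a, rfl, ha⟩ | ⟨b, rfl, hb⟩
  · exact .inl ⟨p.swap, swap_mem_Af hp, rfl⟩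
  · exact .inr (.inr ⟨a, rfl, ha⟩)
  · exact .inr (.inl ⟨b, rfl, hb⟩)

lemma IsMaxPoint.snd_le_of_fst_eq (hw : IsMaxPoint S w) {s : Z2} (hs : s ∈ S)
    (h : (s.1 : WithTop ℤ) = w.1) : (s.2 : WithTop ℤ) ≤ w.2 := by
  rcases hw with ⟨p, hp, rfl⟩ | ⟨a, rfl, -⟩ | ⟨b, rfl, -⟩
  · exact WithTop.coe_le_coe.2 (snd_le_of_mem_Af hp hs (WithTop.coe_inj.1 h))
  · exact le_top
  · exact absurd h WithTop.coe_ne_top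

lemma IsMaxPoint.fst_le_of_snd_eq (hw : IsMaxPoint S w) {s : Z2} (hs : s ∈ S)
    (h : (s.2 : WithTop ℤ) = w.2) : (s.1 : WithTop ℤ) ≤ w.1 :=
  hw.swap.snd_le_of_fst_eq (s := s.swap) (by simpa using hs) h

lemma IsMaxPoint.mem_of_iotaZ_eq (hw : IsMaxPoint S w) {t : Z2} (h : iotaZ t = w) : t ∈ S := by
  rcases hw with ⟨p, hp, rfl⟩ | ⟨a, rfl, -⟩ | ⟨b, rfl, -⟩
  · have : t = p := by simpa [iotaZ, Prod.ext_iff] using h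
    exact this ▸ hp.1
  · exact absurd (congrArg Prod.snd h) WithTop.coe_ne_top
  · exact absurd (congrArg Prod.fst h) WithTop.coe_ne_top

lemma IsMaxPoint.fst_ne_zero (hl : IsLocal S) (hw : IsMaxPoint S w) (hw0 : w ≠ 0) :
    w.1 ≠ 0 := by
  rcases hw with ⟨p, hp, rfl⟩ | ⟨a, rfl, ha⟩ | ⟨b, rfl, -⟩
  · intro h
    exact hw0 (by rw [hl p hp.1 (.inl (WithTop.coe_eq_zero.1 h))]; rfl)
  · intro h
    obtain ⟨y, hy, hay⟩ := ha 0
    obtain rfl : a = 0 := WithTop.coe_eq_zero.1 h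
    have := congrArg Prod.snd (hl _ hay (.inl rfl))
    simp only [Prod.snd_zero] at this
    omega
  · exact WithTop.top_ne_zero

lemma IsMaxPoint.snd_ne_zero (hl : IsLocal S) (hw : IsMaxPoint S w) (hw0 : w ≠ 0) :
    w.2 ≠ 0 :=
  hw.swap.fst_ne_zero hl.preimage_swap (by simpa [Prod.ext_iff, and_comm] using hw0)

end MaxPoint

structure Staircase (S : Set Z2) (n : ℕ) (α : ℕ → Om) : Prop where
  pos : 0 < n
  isMaxPoint : ∀ i < n, IsMaxPoint S (α i)
  ne_zero : ∀ i < n, α i ≠ 0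
  fst_lt : ∀ i j, i < j → j < n → (α i).1 < (α j).1
  snd_lt : ∀ i j, i < j → j < n → (α j).2 < (α i).2

/-- The vertical leg of `α i` runs down its column to just above the row of `α (i + 1)`, the
horizontal leg left along its row to just right of the column of `α (i - 1)`; the horizontal leg
of the first vertex and the vertical leg of the last one are unbounded. -/
def vLeg (n : ℕ) (α : ℕ → Om) (i : ℕ) : Set Z2 :=
  {t | (t.1 : WithTop ℤ) = (α i).1 ∧ (t.2 : WithTop ℤ) ≤ (α i).2 ∧
    (i + 1 < n → (α (i + 1)).2 < t.2)}

def hLeg (α : ℕ → Om) (i : ℕ) : Set Z2 :=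
  {t | (t.2 : WithTop ℤ) = (α i).2 ∧ (t.1 : WithTop ℤ) ≤ (α i).1 ∧ (0 < i → (α (i - 1)).1 < t.1)}

def legSet (S : Set Z2) (n : ℕ) (α : ℕ → Om) : Set Z2 :=
  {t ∈ S | ∃ i < n, t ∈ vLeg n α i ∨ t ∈ hLeg α i}

def transposeSeq (n : ℕ) (α : ℕ → Om) : ℕ → Om := fun i => (α (n - 1 - i)).swap

section TrackShape

variable {S : Set Z2} {n : ℕ} {α : ℕ → Om}

lemma TrackData.staircase (hS : IsGood S) (hTD : TrackData S n α) : Staircase S n α where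
  pos := hTD.1
  isMaxPoint i hi := by
    have hcond : ∀ y, condE S ≤ y → y ∈ S := fun y hy => hS.mem_of_condE_le hy
    have hG3 : G3P S := hS.2.2.2.2.2
    rcases (hTD.2.1 i hi).2 with ⟨p, hp, he⟩ | ⟨a, he, ha⟩ | ⟨b, he, hb⟩
    · exact .inl ⟨p, hp, he.symm⟩
    · exact .inr (.inl ⟨a, he, exists_snd_gt_of_mem hG3 hcond ha⟩)
    · exact .inr (.inr ⟨b, he, exists_fst_gt_of_mem hG3 hcond hb⟩)
  ne_zero i hi := (hTD.2.1 i hi).1.2.1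
  fst_lt := hTD.2.2.1
  snd_lt i j hij hj := by
    have hadj : ∀ k, k + 1 < n → (α (k + 1)).2 < (α k).2 := fun k hk =>
      lt_of_not_ge fun h => (hTD.2.2.2.2.2 k hk).1 ⟨(hTD.2.2.1 k (k + 1) (lt_add_one k) hk).le, h⟩
    induction j, hij using Nat.le_induction with
    | base => exact hadj i hj
    | succ j hij ih => exact (hadj j hj).trans (ih (by omega))

namespace Staircase

lemma fst_le (hst : Staircase S n α) {i j : ℕ} (hij : i ≤ j) (hj : j < n) : (α i).1 ≤ (α j).1 :=
  hij.eq_or_lt.elim (fun h => h ▸ le_rfl) fun h => (hst.fst_lt i j h hj).le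

lemma snd_le (hst : Staircase S n α) {i j : ℕ} (hij : i ≤ j) (hj : j < n) : (α j).2 ≤ (α i).2 :=
  hij.eq_or_lt.elim (fun h => h ▸ le_rfl) fun h => (hst.snd_lt i j h hj).le

lemma transpose (hst : Staircase S n α) : Staircase (Prod.swap ⁻¹' S) n (transposeSeq n α) where
  pos := hst.pos
  isMaxPoint i _ := (hst.isMaxPoint _ (by omega)).swap
  ne_zero i _ h := hst.ne_zero (n - 1 - i) (by omega)
    (by simpa [transposeSeq, Prod.ext_iff, and_comm] using h)
  fst_lt i j hij hj := hst.snd_lt (n - 1 - j) (n - 1 - i) (by omega) (by omega)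
  snd_lt i j hij hj := hst.fst_lt (n - 1 - j) (n - 1 - i) (by omega) (by omega)

end Staircase

lemma mem_vLeg_transposeSeq {i : ℕ} (hi : i < n) {t : Z2} :
    t ∈ vLeg n (transposeSeq n α) i ↔ t.swap ∈ hLeg α (n - 1 - i) := by
  simp only [vLeg, hLeg, transposeSeq, Set.mem_ofPred_eq, Prod.fst_swap, Prod.snd_swap]
  rw [show n - 1 - (i + 1) = n - 1 - i - 1 by omega]
  exact and_congr Iff.rfl (and_congr Iff.rfl (imp_congr (by omega) Iff.rfl))

lemma mem_hLeg_transposeSeq {i : ℕ} (hi : i < n) {t : Z2} :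
    t ∈ hLeg (transposeSeq n α) i ↔ t.swap ∈ vLeg n α (n - 1 - i) := by
  simp only [vLeg, hLeg, transposeSeq, Set.mem_ofPred_eq, Prod.fst_swap, Prod.snd_swap]
  refine and_congr Iff.rfl (and_congr Iff.rfl ?_)
  rcases i with _ | i
  · exact ⟨fun _ h => absurd h (by omega), fun _ h => absurd h (by omega)⟩
  · rw [show n - 1 - (i + 1 - 1) = n - 1 - (i + 1) + 1 by omega]
    exact imp_congr (by omega) Iff.rfl

lemma legSet_transposeSeq :
    legSet (Prod.swap ⁻¹' S) n (transposeSeq n α) = Prod.swap ⁻¹' legSet S n α := by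
  ext t
  simp only [legSet, Set.mem_preimage, Set.mem_ofPred_eq]
  refine and_congr Iff.rfl ⟨fun ⟨i, hi, h⟩ => ⟨n - 1 - i, by omega, ?_⟩,
    fun ⟨j, hj, h⟩ => ⟨n - 1 - j, by omega, ?_⟩⟩
  · rw [mem_vLeg_transposeSeq hi, mem_hLeg_transposeSeq hi] at h
    exact h.symm
  · rw [mem_vLeg_transposeSeq (by omega), mem_hLeg_transposeSeq (by omega),
      show n - 1 - (n - 1 - j) = j by omega]
    exact h.symm

lemma swap_mem_legSet_transposeSeq {x : Z2} :
    x.swap ∈ legSet (Prod.swap ⁻¹' S) n (transposeSeq n α) ↔ x ∈ legSet S n α := by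
  simp [legSet_transposeSeq]

lemma mem_upD_inf (hst : Staircase S n α) {i : ℕ} (hi : i + 1 < n) {t : Z2} :
    t ∈ upD (α i ⊓ α (i + 1)) ↔
      ((t.1 : WithTop ℤ) = (α i).1 ∧ (α (i + 1)).2 < t.2) ∨
        ((t.2 : WithTop ℤ) = (α (i + 1)).2 ∧ (α i).1 < t.1) := by
  have h₁ : (α i ⊓ α (i + 1)).1 = (α i).1 := inf_eq_left.2 (hst.fst_lt i (i + 1) (by omega) hi).le
  have h₂ : (α i ⊓ α (i + 1)).2 = (α (i + 1)).2 :=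
    inf_eq_right.2 (hst.snd_lt i (i + 1) (by omega) hi).le
  simp only [upD, Set.mem_ofPred_eq, h₁, h₂]

lemma trackSet_eq_legSet (hst : Staircase S n α) : trackSet S n α = legSet S n α := by
  have hn := hst.pos
  ext t
  simp only [trackSet, legSet, finPart, lowD1, lowD2, Set.mem_union, Set.mem_inter_iff,
    Set.mem_iUnion, Finset.mem_range, Set.mem_ofPred_eq, exists_prop, iotaZ, Prod.ext_iff]
  constructor
  · rintro ((((⟨h₁, h₂⟩ | ⟨hS, h₂, h₁⟩) | ⟨i, hi, hS, hup⟩) | ⟨hS, h₁, h₂⟩) | ⟨h₁, h₂⟩)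
    · exact ⟨(hst.isMaxPoint 0 hn).mem_of_iotaZ_eq (Prod.ext h₁ h₂), 0, hn,
        .inr ⟨h₂, h₁.le, by simp⟩⟩
    · exact ⟨hS, 0, hn, .inr ⟨h₂, h₁.le, by simp⟩⟩
    · rcases (mem_upD_inf hst (by omega)).1 hup with ⟨h₁, h₂⟩ | ⟨h₂, h₁⟩
      · exact ⟨hS, i, by omega, .inl ⟨h₁,
          (hst.isMaxPoint i (by omega)).snd_le_of_fst_eq hS h₁, fun _ => h₂⟩⟩
      · exact ⟨hS, i + 1, by omega, .inr ⟨h₂,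
          (hst.isMaxPoint (i + 1) (by omega)).fst_le_of_snd_eq hS h₂,
          fun _ => by simpa using h₁⟩⟩
    · exact ⟨hS, n - 1, by omega, .inl ⟨h₁, h₂.le, by omega⟩⟩
    · exact ⟨(hst.isMaxPoint (n - 1) (by omega)).mem_of_iotaZ_eq (Prod.ext h₁ h₂), n - 1,
        by omega, .inl ⟨h₁, h₂.le, by omega⟩⟩
  · rintro ⟨hS, i, hi, ⟨h₁, h₂, h₃⟩ | ⟨h₂, h₁, h₃⟩⟩
    · by_cases hi' : i + 1 < n
      · exact .inl (.inl (.inr ⟨i, by omega, hS, (mem_upD_inf hst hi').2 (.inl ⟨h₁, h₃ hi'⟩)⟩))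
      obtain rfl : i = n - 1 := by omega
      rcases h₂.lt_or_eq with h₂ | h₂
      exacts [.inl (.inr ⟨hS, h₁, h₂⟩), .inr ⟨h₁, h₂⟩]
    · rcases Nat.eq_zero_or_pos i with rfl | hi0
      · rcases h₁.lt_or_eq with h₁ | h₁
        exacts [.inl (.inl (.inl (.inr ⟨hS, h₂, h₁⟩))), .inl (.inl (.inl (.inl ⟨h₁, h₂⟩)))]
      · obtain ⟨j, rfl⟩ : ∃ j, i = j + 1 := ⟨i - 1, by omega⟩
        exact .inl (.inl (.inr ⟨j, by omega, hS,
          (mem_upD_inf hst hi).2 (.inr ⟨h₂, by simpa using h₃ hi0⟩)⟩))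

end TrackShape

section Legs

variable {S : Set Z2} {n : ℕ} {α : ℕ → Om}

lemma le_of_mem_leg {i : ℕ} {t : Z2} (h : t ∈ vLeg n α i ∨ t ∈ hLeg α i) :
    (t.1 : WithTop ℤ) ≤ (α i).1 ∧ (t.2 : WithTop ℤ) ≤ (α i).2 := by
  rcases h with ⟨h₁, h₂, -⟩ | ⟨h₂, h₁, -⟩
  exacts [⟨h₁.le, h₂⟩, ⟨h₁, h₂.le⟩]

lemma coe_untopD_sub_one_lt (w : WithTop ℤ) : ((w.untopD 0 - 1 : ℤ) : WithTop ℤ) < w := by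
  induction w using WithTop.recTopCoe with
  | top => exact WithTop.coe_lt_top _
  | coe x => exact WithTop.coe_lt_coe.2 (by simp)

lemma exists_bound_legSet (S : Set Z2) (n : ℕ) (α : ℕ → Om) :
    ∃ B : ℤ, ∀ t ∈ legSet S n α, t.1 ≤ B ∨ t.2 ≤ B := by
  obtain ⟨B, hB⟩ := ((Finset.range n).image
    fun i => max ((α i).1.untopD 0) ((α i).2.untopD 0)).exists_le
  refine ⟨B, fun t ht => ?_⟩
  obtain ⟨-, i, hi, h⟩ := ht
  have hBi := hB _ (Finset.mem_image_of_mem _ (Finset.mem_range.2 hi))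
  rcases h with ⟨h, -⟩ | ⟨h, -⟩
  · rw [← h, WithTop.untopD_coe] at hBi
    exact .inl ((le_max_left _ _).trans hBi)
  · rw [← h, WithTop.untopD_coe] at hBi
    exact .inr ((le_max_right _ _).trans hBi)

namespace Staircase

lemma zero_notMem_legSet (hl : IsLocal S) (hst : Staircase S n α) : (0 : Z2) ∉ legSet S n α := by
  rintro ⟨-, i, hi, ⟨h, -⟩ | ⟨h, -⟩⟩
  · exact (hst.isMaxPoint i hi).fst_ne_zero hl (hst.ne_zero i hi) (by simpa using h.symm)
  · exact (hst.isMaxPoint i hi).snd_ne_zero hl (hst.ne_zero i hi) (by simpa using h.symm)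

lemma snd_le_of_fst_lt (hst : Staircase S n α) {t t' : Z2} (ht : t ∈ legSet S n α)
    (ht' : t' ∈ legSet S n α) (h : t.1 < t'.1) : t'.2 ≤ t.2 := by
  obtain ⟨-, i, hi, hti⟩ := ht
  obtain ⟨-, j, hj, htj⟩ := ht'
  obtain ⟨hj₁, hj₂⟩ := le_of_mem_leg htj
  have h' : (t.1 : WithTop ℤ) < t'.1 := WithTop.coe_lt_coe.2 h
  rw [← WithTop.coe_le_coe]
  rcases hti with ⟨h₁, -, h₃⟩ | ⟨h₁, -, h₃⟩
  · by_cases hji : j ≤ i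
    · exact absurd (hj₁.trans (hst.fst_le hji hi)) (h₁ ▸ h').not_ge
    · exact hj₂.trans ((hst.snd_le (by omega : i + 1 ≤ j) hj).trans (h₃ (by omega)).le)
  · by_cases hij : i ≤ j
    · exact hj₂.trans (h₁ ▸ hst.snd_le hij hj)
    · exact absurd ((hj₁.trans (hst.fst_le (by omega : j ≤ i - 1) (by omega))).trans_lt
        (h₃ (by omega))) (lt_asymm h')

lemma exists_mem_vLeg_of_fst_eq (hst : Staircase S n α) {t u : Z2} (ht : t ∈ legSet S n α)
    (hu : u ∈ legSet S n α) (h₁ : t.1 = u.1) (h₂ : t.2 < u.2) : ∃ i < n, t ∈ vLeg n α i := by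
  obtain ⟨-, i, hi, hti | ⟨ht₂, -, ht₃⟩⟩ := ht
  · exact ⟨i, hi, hti⟩
  obtain ⟨-, j, hj, huj⟩ := hu
  obtain ⟨hj₁, hj₂⟩ := le_of_mem_leg huj
  by_cases hij : i ≤ j
  · exact absurd ((hj₂.trans (hst.snd_le hij hj)).trans_eq ht₂.symm)
      (WithTop.coe_lt_coe.2 h₂).not_ge
  · exact absurd ((hj₁.trans (hst.fst_le (by omega : j ≤ i - 1) (by omega))).trans_lt
      (ht₃ (by omega))) (by rw [h₁]; exact lt_irrefl _)

/-- Such a `t` lies on a vertical leg (`exists_mem_vLeg_of_fst_eq`). -/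
lemma col_block (hst : Staircase S n α) {t u : Z2} (ht : t ∈ legSet S n α)
    (hu : u ∈ legSet S n α) (h₁ : t.1 = u.1) (h₂ : t.2 < u.2) :
    (∀ s ∈ S, s.1 = t.1 → t.2 ≤ s.2 → s ∈ legSet S n α) ∧
      ∀ w ∈ legSet S n α, t.1 < w.1 → w.2 < t.2 := by
  obtain ⟨i, hi, hx, -, hy⟩ := hst.exists_mem_vLeg_of_fst_eq ht hu h₁ h₂
  refine ⟨fun s hs hs₁ hs₂ => ⟨hs, i, hi, .inl ⟨?_, ?_, ?_⟩⟩, fun w hw hw₁ => ?_⟩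
  · rwa [hs₁]
  · exact (hst.isMaxPoint i hi).snd_le_of_fst_eq hs (by rwa [hs₁])
  · exact fun h => (hy h).trans_le (WithTop.coe_le_coe.2 hs₂)
  · obtain ⟨-, j, hj, hwj⟩ := hw
    obtain ⟨hj₁, hj₂⟩ := le_of_mem_leg hwj
    have hij : i + 1 ≤ j := by
      by_contra! hji
      exact absurd (hj₁.trans (hst.fst_le (by omega : j ≤ i) hi))
        (hx ▸ (WithTop.coe_lt_coe.2 hw₁)).not_ge
    exact WithTop.coe_lt_coe.1 (hj₂.trans_lt ((hst.snd_le hij hj).trans_lt (hy (by omega))))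

lemma exists_mem_legSet_gt (hst : Staircase S n α) {i : ℕ} (hi : i < n) {a : Z2}
    (h₁ : (a.1 : WithTop ℤ) < (α i).1) (h₂ : (a.2 : WithTop ℤ) < (α i).2) :
    ∃ t ∈ legSet S n α, a.1 < t.1 ∧ a.2 < t.2 := by
  rcases hst.isMaxPoint i hi with ⟨p, hp, he⟩ | ⟨x, he, hcol⟩ | ⟨y, he, hrow⟩
  · rw [he] at h₁ h₂
    refine ⟨p, ⟨hp.1, i, hi, .inr ⟨by rw [he]; rfl, by rw [he]; exact le_rfl, fun h => ?_⟩⟩,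
      WithTop.coe_lt_coe.1 h₁, WithTop.coe_lt_coe.1 h₂⟩
    exact (hst.fst_lt (i - 1) i (by omega) hi).trans_eq (by rw [he]; rfl)
  · obtain rfl : i = 0 := by
      by_contra h
      have h' : (α i).2 = ⊤ := by rw [he]
      exact not_top_lt (h' ▸ hst.snd_lt 0 i (by omega) hi)
    obtain ⟨y, hy, hxy⟩ := hcol (max a.2 ((α 1).2.untopD 0))
    refine ⟨(x, y), ⟨hxy, 0, hi, .inl ⟨by rw [he], by rw [he]; exact le_top, fun h => ?_⟩⟩,
      WithTop.coe_lt_coe.1 (by rw [he] at h₁; exact h₁), lt_of_le_of_lt (le_max_left _ _) hy⟩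
    obtain ⟨b, hb⟩ := WithTop.ne_top_iff_exists.1 (hst.snd_lt 0 1 one_pos h).ne_top
    rw [← hb] at hy ⊢
    exact WithTop.coe_lt_coe.2 (lt_of_le_of_lt (by simp) hy)
  · obtain rfl : i = n - 1 := by
      by_contra h
      have h' : (α i).1 = ⊤ := by rw [he]
      exact not_top_lt (h' ▸ hst.fst_lt i (n - 1) (by omega) (by omega))
    obtain ⟨x, hx, hxy⟩ := hrow (max a.1 ((α (n - 1 - 1)).1.untopD 0))
    refine ⟨(x, y), ⟨hxy, n - 1, hi, .inr ⟨by rw [he], by rw [he]; exact le_top, fun h => ?_⟩⟩,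
      lt_of_le_of_lt (le_max_left _ _) hx, WithTop.coe_lt_coe.1 (by rw [he] at h₂; exact h₂)⟩
    obtain ⟨b, hb⟩ := WithTop.ne_top_iff_exists.1
      (hst.fst_lt (n - 1 - 1) (n - 1) (by omega) hi).ne_top
    rw [← hb] at hx ⊢
    exact WithTop.coe_lt_coe.2 (lt_of_le_of_lt (by simp) hx)

lemma legSet_nonempty (hst : Staircase S n α) : (legSet S n α).Nonempty :=
  let ⟨t, ht, _⟩ := hst.exists_mem_legSet_gt hst.pos
    (a := ((α 0).1.untopD 0 - 1, (α 0).2.untopD 0 - 1)) (coe_untopD_sub_one_lt _)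
    (coe_untopD_sub_one_lt _)
  ⟨t, ht⟩

/-- Otherwise `a` lies in the column of a vertex `α i` above it, and then either `a` is on the
vertical leg of `α i` or `b` on the horizontal leg of `α (i + 1)`. -/
lemma exists_ge_fst_ne (hst : Staircase S n α) {a b t₀ : Z2} (ha : a ∈ S \ legSet S n α)
    (hb : b ∈ S \ legSet S n α) (h₂ : a.2 = b.2) (h₁ : a.1 < b.1) (ht₀ : t₀ ∈ legSet S n α)
    (hat₀ : a ≤ t₀) : ∃ t ∈ legSet S n α, a ≤ t ∧ t.1 ≠ a.1 := by
  by_contra! hcol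
  have hNE : ∀ i < n, (a.1 : WithTop ℤ) < (α i).1 → (α i).2 ≤ a.2 := fun i hi h =>
    not_lt.1 fun h' => by
      obtain ⟨t, ht, ht₁, ht₂⟩ := hst.exists_mem_legSet_gt hi h h'
      have := hcol t ht ⟨ht₁.le, ht₂.le⟩
      omega
  have ht₀₁ : t₀.1 = a.1 := hcol t₀ ht₀ hat₀
  have ht₀₂ : a.2 < t₀.2 := lt_of_le_of_ne hat₀.2 fun h => ha.2 (Prod.ext ht₀₁.symm h ▸ ht₀)
  obtain ⟨-, i, hi, hleg⟩ := ht₀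
  obtain ⟨hx, hy⟩ := le_of_mem_leg hleg
  have ha₂ : (a.2 : WithTop ℤ) < (α i).2 := (WithTop.coe_lt_coe.2 ht₀₂).trans_le hy
  have ha₁ : (a.1 : WithTop ℤ) = (α i).1 :=
    (ht₀₁ ▸ hx).eq_or_lt.resolve_right fun h => (hNE i hi h).not_gt ha₂
  by_cases hlow : i + 1 < n ∧ (a.2 : WithTop ℤ) ≤ (α (i + 1)).2
  · have hb₂ : (b.2 : WithTop ℤ) = (α (i + 1)).2 := h₂ ▸ le_antisymm hlow.2
      (hNE (i + 1) hlow.1 (ha₁ ▸ hst.fst_lt i (i + 1) (lt_add_one i) hlow.1))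
    refine hb.2 ⟨hb.1, i + 1, hlow.1, .inr ⟨hb₂,
      (hst.isMaxPoint (i + 1) hlow.1).fst_le_of_snd_eq hb.1 hb₂, fun _ => ?_⟩⟩
    simpa [← ha₁] using h₁
  · exact ha.2 ⟨ha.1, i, hi, .inl ⟨ha₁, ha₂.le, fun h => lt_of_not_ge fun h' => hlow ⟨h, h'⟩⟩⟩

lemma exists_ge_snd_ne (hst : Staircase S n α) {a b t₀ : Z2} (ha : a ∈ S \ legSet S n α)
    (hb : b ∈ S \ legSet S n α) (h₁ : a.1 = b.1) (h₂ : a.2 < b.2) (ht₀ : t₀ ∈ legSet S n α)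
    (hat₀ : a ≤ t₀) : ∃ t ∈ legSet S n α, a ≤ t ∧ t.2 ≠ a.2 := by
  obtain ⟨t, ht, hat, hne⟩ := hst.transpose.exists_ge_fst_ne (a := a.swap) (b := b.swap)
    (t₀ := t₀.swap) ⟨ha.1, mt swap_mem_legSet_transposeSeq.1 ha.2⟩
    ⟨hb.1, mt swap_mem_legSet_transposeSeq.1 hb.2⟩ h₁ h₂
    (swap_mem_legSet_transposeSeq.2 ht₀) (Prod.swap_le_swap.2 hat₀)
  exact ⟨t.swap, swap_mem_legSet_transposeSeq.1 (by simpa using ht),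
    by simpa using Prod.swap_le_swap.2 hat, hne⟩

/-- A saturated chain of `S` cannot step over the track: as `b ⊓ t = a` for every point `t ≥ a` of
the track, all these points lie in the row or the column of `a`. -/
lemma exists_ge_of_consecutive (hmin : MinClosed S) (hst : Staircase S n α) {a b t₀ : Z2}
    (ha : a ∈ S \ legSet S n α) (hb : b ∈ S \ legSet S n α) (hab : a < b)
    (hcons : ∀ c ∈ S, ¬(a < c ∧ c < b)) (ht₀ : t₀ ∈ legSet S n α) (hat₀ : a ≤ t₀) :
    ∃ t ∈ legSet S n α, b ≤ t := by
  by_contra! hbT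
  have hinf : ∀ t ∈ legSet S n α, a ≤ t → b ⊓ t = a := fun t ht hat => by
    by_contra hne
    exact hcons _ (hmin b hb.1 t ht.1) ⟨lt_of_le_of_ne (le_inf hab.le hat) (Ne.symm hne),
      lt_of_le_of_ne inf_le_left fun h => hbT t ht (h ▸ inf_le_right)⟩
  have hcoord : ∀ t ∈ legSet S n α, a ≤ t → min b.1 t.1 = a.1 ∧ min b.2 t.2 = a.2 :=
    fun t ht hat => Prod.ext_iff.1 (hinf t ht hat)
  obtain ⟨hab₁, hab₂⟩ := Prod.le_def.1 hab.le
  rcases hab₁.lt_or_eq with h₁ | h₁ <;> rcases hab₂.lt_or_eq with h₂ | h₂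
  · obtain ⟨c₁, c₂⟩ := hcoord t₀ ht₀ hat₀
    have hat₀' := Prod.le_def.1 hat₀
    have : a = t₀ := Prod.ext (by omega) (by omega)
    exact ha.2 (this ▸ ht₀)
  · obtain ⟨t, ht, hat, hne⟩ := hst.exists_ge_fst_ne ha hb h₂ h₁ ht₀ hat₀
    have := (hcoord t ht hat).1
    have := hat.1
    omega
  · obtain ⟨t, ht, hat, hne⟩ := hst.exists_ge_snd_ne ha hb h₁ h₂ ht₀ hat₀
    have := (hcoord t ht hat).2
    have := hat.2
    omega
  · exact hab.ne (Prod.ext h₁ h₂)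

end Staircase

end Legs

section RemoveTrack

variable {S : Set Z2} {n : ℕ} {α : ℕ → Om}

/-- Along a column chain `p = p₀ < ⋯ < p_d = u` of `S`, (G3) gives points `e_l ∈ S` right of
`p_l` in its row; the points `q_l = e_l ⊓ q_{l+1}`, `q_d = v`, form a chain strictly right of
the column and not below `p`. -/
lemma exists_hasChain_right_of_col (hmin : MinClosed S) (hG3 : G3P S) {X : ℤ} {d : ℕ}
    {p u v : Z2} (hp : HasChain (S ∩ {x | x.1 = X}) d p u) (hv : v ∈ S) (hXv : X < v.1)
    (huv : u.2 ≤ v.2) : ∃ q, HasChain (S ∩ {x | X < x.1 ∧ p.2 ≤ x.2}) d q v := by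
  induction d generalizing p with
  | zero =>
    obtain rfl := hp.eq_of_zero
    exact ⟨v, .refl ⟨hv, hXv, huv⟩⟩
  | succ d ih =>
    obtain ⟨p', ⟨hpS, hpX⟩, hpp', hp'⟩ := hp.exists_of_succ
    obtain ⟨q', hq'⟩ := ih hp'
    obtain ⟨hq'S, hq'₁, hq'₂⟩ := hq'.mem_left
    have hp'X : p'.1 = X := hp'.mem_left.2
    have hpp'₂ : p.2 < p'.2 := by
      rcases Prod.lt_iff.1 hpp' with ⟨h, -⟩ | ⟨-, h⟩
      exacts [absurd h (by simp only [Set.mem_ofPred_eq] at hpX; omega), h]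
    obtain ⟨e, heS, he₁, he₂⟩ := hG3.exists_fst_lt hpS hp'.mem_left.1 (hpX.trans hp'X.symm) hpp'₂
    have hsub : S ∩ {x | X < x.1 ∧ p'.2 ≤ x.2} ⊆ S ∩ {x | X < x.1 ∧ p.2 ≤ x.2} :=
      fun x hx => ⟨hx.1, hx.2.1, hpp'₂.le.trans hx.2.2⟩
    refine ⟨e ⊓ q', .cons ⟨hmin e heS q' hq'S, ?_, ?_⟩ ?_ (hq'.mono hsub)⟩
    · simp only [Set.mem_ofPred_eq] at hpX
      exact lt_min (hpX ▸ he₁) hq'₁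
    · exact le_min he₂.ge (hpp'₂.le.trans hq'₂)
    · refine lt_of_le_of_ne inf_le_right fun h => ?_
      have : min e.2 q'.2 = q'.2 := congrArg Prod.snd h
      omega

namespace Staircase

lemma exists_bypass_of_fst_eq (hmin : MinClosed S) (hG3 : G3P S) (hst : Staircase S n α)
    {m i j : ℕ} {f : ℕ → Z2} (hmem : ∀ l ≤ m, f l ∈ S) (hlt : ∀ l < m, f l < f (l + 1))
    (hij : i < j) (hjm : j < m) (hi : f i ∈ legSet S n α) (hj : f j ∈ legSet S n α)
    (hv : f (j + 1) ∉ legSet S n α) (h₁ : (f i).1 = (f j).1) :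
    ∃ x, f i < x ∧ HasChain (S \ legSet S n α) (j - i) x (f (j + 1)) := by
  have hvS := hmem (j + 1) hjm
  have hjv : f j < f (j + 1) := hlt j hjm
  have hsub : ∀ l, i ≤ l → l ≤ j → f i ≤ f l ∧ f l ≤ f j := fun l h₁ h₂ =>
    ⟨(HasChain.of_fn h₁ (fun k _ hk => hmem k (by omega)) fun k _ hk => hlt k (by omega)).le,
      (HasChain.of_fn h₂ (fun k _ hk => hmem k (by omega)) fun k _ hk => hlt k (by omega)).le⟩
  have h₂ : (f i).2 < (f j).2 := by
    rcases Prod.lt_iff.1 ((hlt i (by omega)).trans_le (hsub (i + 1) (by omega) (by omega)).2)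
      with ⟨h, -⟩ | ⟨-, h⟩
    exacts [absurd h (by omega), h]
  obtain ⟨hfill, hright⟩ := hst.col_block hi hj h₁ h₂
  have hcol : HasChain (S ∩ {x | x.1 = (f i).1}) (j - i) (f i) (f j) :=
    HasChain.of_fn hij.le (fun l hl₁ hl₂ => ⟨hmem l (by omega), by
      have := hsub l hl₁ hl₂; simp only [Set.mem_ofPred_eq]
      exact le_antisymm (h₁ ▸ this.2.1) this.1.1⟩) fun l _ hl => hlt l (by omega)
  have hXv : (f i).1 < (f (j + 1)).1 :=
    lt_of_le_of_ne (h₁ ▸ hjv.le.1) fun h => hv (hfill _ hvS h.symm (h₂.le.trans hjv.le.2))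
  obtain ⟨q, hq⟩ := exists_hasChain_right_of_col hmin hG3 hcol hvS hXv hjv.le.2
  obtain ⟨-, hq₁, hq₂⟩ := hq.mem_left
  exact ⟨q, Prod.lt_iff.2 (.inl ⟨hq₁, hq₂⟩),
    hq.mono fun x ⟨hx, hx₁, hx₂⟩ => ⟨hx, fun hxT => (hright x hxT hx₁).not_ge hx₂⟩⟩

lemma exists_bypass_of_snd_eq (hmin : MinClosed S) (hG3 : G3P S) (hst : Staircase S n α)
    {m i j : ℕ} {f : ℕ → Z2} (hmem : ∀ l ≤ m, f l ∈ S) (hlt : ∀ l < m, f l < f (l + 1))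
    (hij : i < j) (hjm : j < m) (hi : f i ∈ legSet S n α) (hj : f j ∈ legSet S n α)
    (hv : f (j + 1) ∉ legSet S n α) (h₂ : (f i).2 = (f j).2) :
    ∃ x, f i < x ∧ HasChain (S \ legSet S n α) (j - i) x (f (j + 1)) := by
  obtain ⟨x, hx, hchain⟩ := hst.transpose.exists_bypass_of_fst_eq hmin.preimage_swap
    hG3.preimage_swap (f := fun l => (f l).swap) (by simpa using hmem)
    (fun l hl => Prod.swap_lt_swap.2 (hlt l hl)) hij hjm (swap_mem_legSet_transposeSeq.2 hi)
    (swap_mem_legSet_transposeSeq.2 hj) (mt swap_mem_legSet_transposeSeq.1 hv) h₂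
  refine ⟨x.swap, by simpa using Prod.swap_lt_swap.2 hx, ?_⟩
  simpa using hchain.swap.mono (F := S \ legSet S n α) fun y hy =>
    ⟨by simpa using hy.1, mt swap_mem_legSet_transposeSeq.2 hy.2⟩

/-- By `snd_le_of_fst_lt` the track points `f i ≤ f j` lie on a column or a row. -/
lemma exists_bypass (hmin : MinClosed S) (hG3 : G3P S) (hst : Staircase S n α) {m i j : ℕ} {f : ℕ → Z2}
    (hmem : ∀ l ≤ m, f l ∈ S) (hlt : ∀ l < m, f l < f (l + 1)) (hij : i ≤ j) (hjm : j < m)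
    (hi : f i ∈ legSet S n α) (hj : f j ∈ legSet S n α) (hv : f (j + 1) ∉ legSet S n α) :
    ∃ x, f i < x ∧ HasChain (S \ legSet S n α) (j - i) x (f (j + 1)) := by
  rcases hij.eq_or_lt with rfl | hij
  · exact ⟨f (i + 1), hlt i hjm,
      by simpa using HasChain.refl (E := S \ legSet S n α) ⟨hmem (i + 1) hjm, hv⟩⟩
  have hle : f i ≤ f j := (HasChain.of_fn hij.le (fun k _ hk => hmem k (by omega))
    fun k _ hk => hlt k (by omega)).le
  rcases hle.1.eq_or_lt with h₁ | h₁
  · exact hst.exists_bypass_of_fst_eq hmin hG3 hmem hlt hij hjm hi hj hv h₁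
  · exact hst.exists_bypass_of_snd_eq hmin hG3 hmem hlt hij hjm hi hj hv
      (le_antisymm hle.2 (hst.snd_le_of_fst_lt hi hj h₁))

/-- Bypassing the block of track points of a longest chain of `S` from `0` to `A` costs one step. -/
lemma chainDist_le_chainDist_sdiff_add_one (hS : IsGood S) (hl : IsLocal S)
    (hst : Staircase S n α) {A : Z2} (hA : A ∈ S \ legSet S n α) :
    chainDist S 0 A ≤ chainDist (S \ legSet S n α) 0 A + 1 := by
  classical
  obtain ⟨hSorth, h0S, -, hmin, -, hG3⟩ := hS
  set T := legSet S n α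
  obtain ⟨k, hk⟩ := exists_hasChain_of_le (hSorth hA.1) h0S hA.1
  obtain ⟨f, ⟨hmem, hlt, -⟩, hf0, hfm⟩ := hk.exists_isSatChain_chainDist
  set m := chainDist S 0 A
  by_cases hT : ∃ l, l ≤ m ∧ f l ∈ T
  swap
  · push Not at hT
    have := (HasChain.of_fn (E := S \ T) (Nat.zero_le m) (fun l _ hl => ⟨hmem l hl, hT l hl⟩)
      fun l _ hl => hlt l hl).le_chainDist
    rw [hf0, hfm] at this
    omega
  set i := Nat.find hT
  set j := Nat.findGreatest (fun l => f l ∈ T) m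
  obtain ⟨him, hi⟩ := Nat.find_spec hT
  have hj : f j ∈ T := Nat.findGreatest_spec (P := fun l => f l ∈ T) him hi
  have hij : i ≤ j := Nat.le_findGreatest (P := fun l => f l ∈ T) him hi
  have hi0 : 0 < i := Nat.pos_of_ne_zero fun h => hst.zero_notMem_legSet hl (hf0 ▸ h ▸ hi)
  have hjm : j < m := lt_of_le_of_ne (Nat.findGreatest_le m) fun h => hA.2 (hfm ▸ h ▸ hj)
  have hpre : ∀ l < i, f l ∉ T := fun l hl hlT => Nat.find_min hT hl ⟨by omega, hlT⟩
  have hpost : ∀ l, j < l → l ≤ m → f l ∉ T := fun l h₁ h₂ =>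
    Nat.findGreatest_is_greatest h₁ h₂
  obtain ⟨x, hx, hbypass⟩ :=
    hst.exists_bypass hmin hG3 hmem hlt hij hjm hi hj (hpost (j + 1) (by omega) (by omega))
  have hbefore := HasChain.of_fn (E := S \ T) (Nat.zero_le (i - 1))
    (fun l _ hl => ⟨hmem l (by omega), hpre l (by omega)⟩) fun l _ hl => hlt l (by omega)
  have hafter := HasChain.of_fn (E := S \ T) (Nat.succ_le_of_lt hjm)
    (fun l hl₁ hl₂ => ⟨hmem l hl₂, hpost l (by omega) hl₂⟩) fun l _ hl => hlt l hl
  have hlast : f (i - 1) < f i := by simpa [Nat.sub_add_cancel hi0] using hlt (i - 1) (by omega)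
  have := (hbefore.trans (.cons hbefore.mem_right (hlast.trans hx)
    (hbypass.trans hafter))).le_chainDist
  rw [hf0, hfm] at this
  omega

/-- A longest chain of `S ∖ T` from `0` to `A` is not saturated in `S`: otherwise it would step
over the track. -/
lemma chainDist_sdiff_add_one_le (hS : IsGood S) (hl : IsLocal S) (hst : Staircase S n α)
    {A : Z2} (hA : A ∈ S) (hAT : ∀ t ∈ legSet S n α, ¬A ≤ t) :
    chainDist (S \ legSet S n α) 0 A + 1 ≤ chainDist S 0 A := by
  classical
  obtain ⟨hSorth, h0S, -, hmin, -, -⟩ := hS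
  set T := legSet S n α
  obtain ⟨k, hk⟩ := exists_hasChain_of_le (E := S \ T) (hSorth hA)
    ⟨h0S, hst.zero_notMem_legSet hl⟩ ⟨hA, fun h => hAT A h le_rfl⟩
  obtain ⟨f, ⟨hmem, hlt, -⟩, hf0, hfm⟩ := hk.exists_isSatChain_chainDist
  set m := chainDist (S \ T) 0 A
  by_cases hsat : ∀ i < m, ∀ c ∈ S, ¬(f i < c ∧ c < f (i + 1))
  · exfalso
    set P : ℕ → Prop := fun l => ∃ t ∈ T, f l ≤ t
    obtain ⟨t₀, ht₀⟩ := hst.legSet_nonempty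
    have hP0 : P 0 := ⟨t₀, ht₀, hf0 ▸ hSorth ht₀.1⟩
    have hPm : ¬P m := fun ⟨t, ht, h⟩ => hAT t ht (hfm ▸ h)
    set i := Nat.findGreatest P m
    have hi : P i := Nat.findGreatest_spec (Nat.zero_le m) hP0
    have him : i < m := lt_of_le_of_ne (Nat.findGreatest_le m) fun h => hPm (h ▸ hi)
    obtain ⟨t, ht, hit⟩ := hi
    exact Nat.findGreatest_is_greatest (lt_add_one i) him
      (hst.exists_ge_of_consecutive hmin (hmem i him.le) (hmem (i + 1) him)
        (hlt i him) (fun c hc => hsat i him c hc) ht hit)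
  push Not at hsat
  obtain ⟨i, hi, c, hc, h₁, h₂⟩ := hsat
  have := hasChain_succ_of_between (E := S) (fun l hl => (hmem l hl).1) hlt hi hc h₁ h₂
  rw [hf0, hfm] at this
  exact this.le_chainDist

end Staircase

end RemoveTrack

/-- If `T` is a track of a local good semigroup `S ⊆ ℕ²`,
then the good semigroup `S' = S∖T` satisfies `g(S') = g(S) + 1`. -/
theorem genus_remove_track (S T : Set Z2) (hS : IsGood S) (hl : IsLocal S)
    (hT : IsTrack S T) :
    genus (S \ T) = genus S + 1 := by
  obtain ⟨n, α, hTD, rfl⟩ := hT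
  have hst := hTD.staircase hS
  rw [trackSet_eq_legSet hst]
  have ⟨hSorth, h0S, _, _, ⟨δ, hδ⟩, _⟩ := hS
  obtain ⟨B, hB⟩ := exists_bound_legSet S n α
  have hfar : ∀ y, δ ⊔ (B + 1, B + 1) ≤ y → y ∈ S ∧ ∀ t ∈ legSet S n α, ¬y ≤ t :=
    fun y hy => ⟨hδ y (le_sup_left.trans hy), fun t ht hyt => by
      obtain ⟨h₁, h₂⟩ := (le_sup_right.trans hy).trans hyt
      rcases hB t ht with h | h <;> simp only at h₁ h₂ <;> omega⟩
  obtain ⟨β₁, hβ₁⟩ := exists_genus_eq hSorth h0S hδ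
  obtain ⟨β₂, hβ₂⟩ := exists_genus_eq (E := S \ legSet S n α) (fun x hx => hSorth hx.1)
    ⟨h0S, hst.zero_notMem_legSet hl⟩
    fun y hy => ⟨(hfar y hy).1, fun h => (hfar y hy).2 y h le_rfl⟩
  set A := β₁ ⊔ β₂ ⊔ (δ ⊔ (B + 1, B + 1))
  obtain ⟨hAS, hAT⟩ := hfar A le_sup_right
  have h₁ := hst.chainDist_le_chainDist_sdiff_add_one hS hl ⟨hAS, fun h => hAT A h le_rfl⟩
  have h₂ := hst.chainDist_sdiff_add_one_le hS hl hAS hAT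
  rw [hβ₁ A (le_sup_left.trans le_sup_left), hβ₂ A (le_sup_right.trans le_sup_left)]
  omega
end

section
/- Let S and S' be local good semigroups of ℕ² such that S is a special parent of S'. Then c(S) < c(S'), i.e. c(S) ≤ c(S') componentwise and c(S) ≠ c(S'). -/
/-! Deleting `T` from `S` can only shrink the set of conductor candidates, so `c(S) ≤ c(S')`.
A beyond track contains some `α ≥ c(S)`, which is missing from `S' = S ∖ T`; since `c(S')`
is itself a conductor candidate of `S'`, it cannot equal `c(S)`. -/

def conductorSet (E : Set Z2) : Set Z2 := {δ : Z2 | ∀ y : Z2, δ ≤ y → y ∈ E}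

lemma condE_eq_sInf_conductorSet (E : Set Z2) :
    condE E = (sInf (Prod.fst '' conductorSet E), sInf (Prod.snd '' conductorSet E)) :=
  rfl

lemma conductorSet_mono {E F : Set Z2} (h : E ⊆ F) : conductorSet E ⊆ conductorSet F :=
  fun _ hδ y hy => h (hδ y hy)

lemma conductorSet_subset_orth {E : Set Z2} (hE : E ⊆ orth) : conductorSet E ⊆ orth :=
  fun δ hδ => hE (hδ δ le_rfl)

lemma bddBelow_fst_image_of_subset_orth {A : Set Z2} (hA : A ⊆ orth) :
    BddBelow (Prod.fst '' A) :=
  ⟨0, by rintro _ ⟨a, ha, rfl⟩; exact (hA ha).1⟩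

lemma bddBelow_snd_image_of_subset_orth {A : Set Z2} (hA : A ⊆ orth) :
    BddBelow (Prod.snd '' A) :=
  ⟨0, by rintro _ ⟨a, ha, rfl⟩; exact (hA ha).2⟩

lemma condE_le_of_subset {E F : Set Z2} (hEF : E ⊆ F) (hF : F ⊆ orth)
    (hE : (conductorSet E).Nonempty) : condE F ≤ condE E := by
  have hF' := conductorSet_subset_orth hF
  have hmono := conductorSet_mono hEF
  exact ⟨csInf_le_csInf (bddBelow_fst_image_of_subset_orth hF') (hE.image _)
      (Set.image_mono hmono),
    csInf_le_csInf (bddBelow_snd_image_of_subset_orth hF') (hE.image _)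
      (Set.image_mono hmono)⟩

/-- The two coordinates of `c(E)` are attained by possibly different candidates `δ₁`, `δ₂`;
for `y ≥ c(E)` the points `(y.1, max y.2 δ₁.2)` and `(max y.1 δ₂.1, y.2)` lie in `E`, and (G1)
gives their meet `y`. -/
lemma condE_mem_conductorSet {E : Set Z2} (hmin : MinClosed E) (hE : E ⊆ orth)
    (hne : (conductorSet E).Nonempty) : condE E ∈ conductorSet E := by
  have hE' := conductorSet_subset_orth hE
  obtain ⟨δ₁, hδ₁, hδ₁_eq⟩ :=
    Int.csInf_mem (hne.image Prod.fst) (bddBelow_fst_image_of_subset_orth hE')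
  obtain ⟨δ₂, hδ₂, hδ₂_eq⟩ :=
    Int.csInf_mem (hne.image Prod.snd) (bddBelow_snd_image_of_subset_orth hE')
  intro y hy
  rw [condE_eq_sInf_conductorSet, ← hδ₁_eq, ← hδ₂_eq] at hy
  have hp : ((y.1, max y.2 δ₁.2) : Z2) ∈ E := hδ₁ _ ⟨hy.1, le_max_right _ _⟩
  have hq : ((max y.1 δ₂.1, y.2) : Z2) ∈ E := hδ₂ _ ⟨le_max_right _ _, hy.2⟩
  have hmeet : ((y.1, max y.2 δ₁.2) : Z2) ⊓ (max y.1 δ₂.1, y.2) = y := by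
    ext <;> simp
  exact hmeet ▸ hmin _ hp _ hq

theorem cond_lt_of_specialParent_general (S S' : Set Z2) (hS' : IsGood S')
    (hpar : SpecialParent S S') :
    condE S ≤ condE S' ∧ condE S ≠ condE S' := by
  obtain ⟨hS, -, T, ⟨-, a, haT, -, hca⟩, rfl⟩ := hpar
  obtain ⟨hS'orth, -, -, hS'min, hS'cond, -⟩ := hS'
  refine ⟨condE_le_of_subset Set.sdiff_subset hS.1 hS'cond, fun heq => ?_⟩
  exact (condE_mem_conductorSet hS'min hS'orth hS'cond a (heq ▸ hca)).2 haT

/-- If `S` is a special parent of `S'`, then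
`c(S) < c(S')`, i.e. `c(S) ≤ c(S')` componentwise and `c(S) ≠ c(S')`. -/
theorem cond_lt_of_specialParent (S S' : Set Z2) (hS' : IsGood S')
    (hl' : IsLocal S') (hpar : SpecialParent S S') :
    condE S ≤ condE S' ∧ condE S ≠ condE S' :=
  cond_lt_of_specialParent_general S S' hS' hpar
end

section
/- Let A ⊆ ℕ² be such that there exists c ∈ ℕ² with c+ℕ² ⊆ ℕ²∖A, and suppose A = B₁ ∪ … ∪ B_h with B_l ∩ B_m = ∅ whenever l ≠ m. Then NL(A) ≤ Σ_{j=1}^h NL(B_j). -/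
/-- `a ≪ b`: both coordinates strictly smaller. -/
def llt (a b : Z2) : Prop := a.1 < b.1 ∧ a.2 < b.2

/-- `B`: the elements of `R` that are maximal with respect to `≤≤`. -/
def Bof (R : Set Z2) : Set Z2 := {a ∈ R | ∀ b ∈ R, ¬ llt a b}

/-- `C`: the elements of `B` expressible as the componentwise minimum of two
other elements of `B`. -/
def Cof (B : Set Z2) : Set Z2 :=
  {a ∈ B | ∃ b ∈ B, ∃ c ∈ B, b ≠ a ∧ c ≠ a ∧ a = b ⊓ c}

/-- One step of the level construction: `D = B ∖ C`. -/
def Dof (R : Set Z2) : Set Z2 := Bof R \ Cof (Bof R)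

/-- `NLrem A i = D^(1) ∪ ⋯ ∪ D^(i)`: the union of the first `i` levels of `A`. -/
def NLrem (A : Set Z2) : ℕ → Set Z2
  | 0 => ∅
  | i + 1 => NLrem A i ∪ Dof (A \ NLrem A i)

/-- `NL(A)`: the number of levels of `A`, i.e. the least `N` with
`A = D^(1) ∪ ⋯ ∪ D^(N)`. -/
noncomputable def NL (A : Set Z2) : ℕ := sInf {N : ℕ | A ⊆ NLrem A N}

/-- The pseudo-Frobenius elements `PF(S) = {α ∈ ℕ²∖S : α + M ⊆ S}`. -/
def PFset (S : Set Z2) : Set Z2 :=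
  {a : Z2 | a ∈ orth ∧ a ∉ S ∧ ∀ m ∈ S, m ≠ 0 → a + m ∈ S}

/-- The type `t(S) = NL(PF(S))`. -/
noncomputable def typ (S : Set Z2) : ℕ := NL (PFset S)

/-!
A point `a` survives in `E` if some `b ∈ E` has `a ≪ b`, or `E` has points strictly above `a`
in its column and strictly to its right in its row; for `a ∈ E` this says exactly `a ∉ Dof E`.
The potential `φ(a) = ∑ⱼ NL(B_j ∩ (a + ℕ²))` strictly decreases from a survivor to one of its
witnesses: for `a ∈ B_j`, if no witness `b` had fewer levels in `B_j ∩ (b + ℕ²)` than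
`B_j ∩ (a + ℕ²)` has, the last levels of the sets `B_j ∩ (b + ℕ²)` would contain witnesses keeping
`a` in `B_j ∩ (a + ℕ²)` one level longer than that set lasts. Hence a point of `A` outside its
first `k` levels has `k < φ(a) ≤ ∑ⱼ NL(B_j)`. The same descent, with the distance to `c + ℕ²` as
potential, shows that all these level counts are finite, so no `NL` takes the junk value
`sInf ∅ = 0`.
-/

def Survives (E : Set Z2) (a : Z2) : Prop :=
  (∃ b ∈ E, llt a b) ∨
    ((∃ b ∈ E, b.1 = a.1 ∧ a.2 < b.2) ∧ (∃ b ∈ E, b.2 = a.2 ∧ a.1 < b.1))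

def survivors (A : Set Z2) : ℕ → Set Z2
  | 0 => A
  | k + 1 => {a ∈ survivors A k | Survives (survivors A k) a}

def HasFiniteLevels (A : Set Z2) : Prop := ∃ N, survivors A N = ∅

/-- Witnesses may be replaced by larger ones: a witness that stops being straight above or
to the right of `a` becomes a witness `a ≪ d`. -/
theorem Survives.of_dominated {E F : Set Z2} {a : Z2}
    (hdom : ∀ b ∈ E, a ≤ b → ∃ d ∈ F, b ≤ d) (h : Survives E a) : Survives F a := by
  by_cases hll : ∃ d ∈ F, llt a d
  · exact Or.inl hll
  simp only [llt, not_exists, not_and, not_lt] at hll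
  rcases h with ⟨b, hb, h1, h2⟩ | ⟨⟨bN, hbN, hN1, hN2⟩, ⟨bE, hbE, hE1, hE2⟩⟩
  · obtain ⟨d, hd, hbd⟩ := hdom b hb (Prod.le_def.2 ⟨h1.le, h2.le⟩)
    have := hll d hd (h1.trans_le hbd.1)
    have := Prod.le_def.1 hbd
    omega
  · obtain ⟨dN, hdN, hbdN⟩ := hdom bN hbN (Prod.le_def.2 ⟨hN1.ge, hN2.le⟩)
    obtain ⟨dE, hdE, hbdE⟩ := hdom bE hbE (Prod.le_def.2 ⟨hE2.le, hE1.ge⟩)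
    have := hll dN hdN
    have := hll dE hdE
    have := Prod.le_def.1 hbdN
    have := Prod.le_def.1 hbdE
    exact Or.inr ⟨⟨dN, hdN, by omega, by omega⟩, ⟨dE, hdE, by omega, by omega⟩⟩

theorem Survives.mono {E F : Set Z2} {a : Z2} (hEF : E ⊆ F) (h : Survives E a) :
    Survives F a :=
  h.of_dominated fun b hb _ => ⟨b, hEF hb, le_rfl⟩

theorem survivors_subset (A : Set Z2) : ∀ k, survivors A k ⊆ A
  | 0 => subset_rfl
  | k + 1 => fun _ ha => survivors_subset A k ha.1

theorem survivors_antitone (A : Set Z2) : Antitone (survivors A) :=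
  antitone_nat_of_succ_le fun _ _ ha => ha.1

theorem survivors_mono {A B : Set Z2} (hAB : A ⊆ B) : ∀ k, survivors A k ⊆ survivors B k
  | 0 => hAB
  | k + 1 => fun _ ha => ⟨survivors_mono hAB k ha.1, ha.2.mono (survivors_mono hAB k)⟩

theorem mem_survivors_succ {A : Set Z2} {a : Z2} (ha : a ∈ A) :
    ∀ k, Survives (survivors A k) a → a ∈ survivors A (k + 1)
  | 0, h => ⟨ha, h⟩
  | k + 1, h =>
    ⟨mem_survivors_succ ha k (h.mono fun _ hb => hb.1), h⟩

theorem HasFiniteLevels.mono {A B : Set Z2} (hB : HasFiniteLevels B) (hAB : A ⊆ B) :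
    HasFiniteLevels A :=
  let ⟨N, hN⟩ := hB
  ⟨N, Set.subset_empty_iff.1 (hN ▸ survivors_mono hAB N)⟩

theorem mem_Bof_of_le {R : Set Z2} {a b : Z2} (ha : a ∈ Bof R) (hb : b ∈ R) (hab : a ≤ b) :
    b ∈ Bof R :=
  ⟨hb, fun x hx hbx => ha.2 x hx ⟨hab.1.trans_lt hbx.1, hab.2.trans_lt hbx.2⟩⟩

theorem mem_Cof_Bof_iff {R : Set Z2} {a : Z2} (ha : a ∈ Bof R) :
    a ∈ Cof (Bof R) ↔
      (∃ b ∈ R, b.1 = a.1 ∧ a.2 < b.2) ∧ (∃ b ∈ R, b.2 = a.2 ∧ a.1 < b.1) := by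
  constructor
  · rintro ⟨-, b, hb, e, he, hba, hea, rfl⟩
    have hb' := ha.2 b hb.1
    have he' := ha.2 e he.1
    simp only [llt, Prod.fst_inf, Prod.snd_inf, ne_eq, Prod.ext_iff, not_and, not_lt]
      at hb' he' hba hea ⊢
    by_cases hb1 : b.1 ≤ e.1
    · exact ⟨⟨b, hb.1, by omega, by omega⟩, ⟨e, he.1, by omega, by omega⟩⟩
    · exact ⟨⟨e, he.1, by omega, by omega⟩, ⟨b, hb.1, by omega, by omega⟩⟩
  · rintro ⟨⟨bN, hbN, hN1, hN2⟩, ⟨bE, hbE, hE1, hE2⟩⟩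
    refine ⟨ha, bN, mem_Bof_of_le ha hbN (Prod.le_def.2 ⟨hN1.ge, hN2.le⟩),
      bE, mem_Bof_of_le ha hbE (Prod.le_def.2 ⟨hE2.le, hE1.ge⟩), ?_, ?_, ?_⟩ <;>
      simp only [ne_eq, Prod.ext_iff, Prod.fst_inf, Prod.snd_inf] <;> omega

theorem Dof_eq_not_survives (R : Set Z2) : Dof R = {a ∈ R | ¬ Survives R a} := by
  ext a
  by_cases hB : a ∈ Bof R
  · simp only [Dof, Set.mem_sdiff, mem_Cof_Bof_iff hB, Set.mem_ofPred_eq, Survives]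
    have : ¬ ∃ b ∈ R, llt a b := fun ⟨b, hb, hab⟩ => hB.2 b hb hab
    simp only [hB, hB.1, this, true_and, false_or]
  · simp only [Bof, Set.mem_ofPred_eq, not_and, not_forall, not_not] at hB
    simp only [Dof, Bof, Set.mem_sdiff, Set.mem_ofPred_eq, Survives]
    grind

theorem NLrem_eq_diff_survivors (A : Set Z2) : ∀ N, NLrem A N = A \ survivors A N
  | 0 => by simp [NLrem, survivors]
  | N + 1 => by
    rw [NLrem, NLrem_eq_diff_survivors A N, Set.sdiff_sdiff_cancel_left (survivors_subset A N),
      Dof_eq_not_survives]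
    ext a
    simp only [survivors, Set.mem_union, Set.mem_sdiff, Set.mem_ofPred_eq]
    have := @survivors_subset A N a
    tauto

theorem NL_eq_sInf (A : Set Z2) : NL A = sInf {N | survivors A N = ∅} := by
  simp only [NL, NLrem_eq_diff_survivors, Set.subset_sdiff, subset_rfl, true_and,
    Set.disjoint_iff_inter_eq_empty, Set.inter_eq_right.2 (survivors_subset A _)]

theorem NL_le_of_survivors_eq_empty {A : Set Z2} {N : ℕ} (h : survivors A N = ∅) :
    NL A ≤ N :=
  NL_eq_sInf A ▸ Nat.sInf_le h

theorem lt_NL_iff {A : Set Z2} (hA : HasFiniteLevels A) {k : ℕ} :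
    k < NL A ↔ (survivors A k).Nonempty := by
  rw [Set.nonempty_iff_ne_empty]
  constructor
  · exact fun hk hempty => (NL_le_of_survivors_eq_empty hempty).not_gt hk
  · intro hne
    by_contra! hle
    have hNL : survivors A (NL A) = ∅ := NL_eq_sInf A ▸ Nat.sInf_mem hA
    exact hne (Set.subset_empty_iff.1 (hNL ▸ survivors_antitone A hle))

theorem NL_pos {A : Set Z2} (hA : HasFiniteLevels A) {a : Z2} (ha : a ∈ A) : 0 < NL A :=
  (lt_NL_iff hA).2 ⟨a, ha⟩

theorem NL_mono {A B : Set Z2} (hAB : A ⊆ B) (hB : HasFiniteLevels B) : NL A ≤ NL B :=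
  NL_le_of_survivors_eq_empty <| Set.subset_empty_iff.1 <|
    (NL_eq_sInf B ▸ Nat.sInf_mem hB : survivors B (NL B) = ∅) ▸ survivors_mono hAB _

theorem Survives.exists_NL_inter_Ici_lt {X E : Set Z2} {a : Z2} (hX : HasFiniteLevels X)
    (ha : a ∈ X) (h : Survives E a) :
    ∃ b ∈ E, a ≤ b ∧ NL (X ∩ Set.Ici b) < NL (X ∩ Set.Ici a) := by
  have hY : HasFiniteLevels (X ∩ Set.Ici a) := hX.mono Set.inter_subset_left
  obtain ⟨m, hm⟩ : ∃ m, NL (X ∩ Set.Ici a) = m + 1 :=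
    Nat.exists_eq_add_one.2 (NL_pos hY ⟨ha, Set.self_mem_Ici⟩)
  by_contra! hge
  have hsurv : Survives (survivors (X ∩ Set.Ici a) m) a := by
    refine h.of_dominated fun b hb hab => ?_
    have hXb : HasFiniteLevels (X ∩ Set.Ici b) := hX.mono Set.inter_subset_left
    obtain ⟨d, hd⟩ := (lt_NL_iff hXb (k := m)).1 (by have := hge b hb hab; omega)
    refine ⟨d, survivors_mono ?_ m hd, (survivors_subset (X ∩ Set.Ici b) m hd).2⟩
    exact Set.inter_subset_inter_right X (Set.Ici_subset_Ici.2 hab)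
  have hlast : a ∈ survivors (X ∩ Set.Ici a) (m + 1) :=
    mem_survivors_succ (A := X ∩ Set.Ici a) ⟨ha, Set.self_mem_Ici⟩ m hsurv
  have := (lt_NL_iff hY).2 ⟨a, hlast⟩
  omega

theorem survivors_eq_empty_of_descent {A : Set Z2} {φ : Z2 → ℕ} {N : ℕ}
    (hpos : ∀ a ∈ A, 0 < φ a)
    (hdesc : ∀ E ⊆ A, ∀ a ∈ A, Survives E a → ∃ b ∈ E, φ b < φ a)
    (hN : ∀ a ∈ A, φ a ≤ N) : survivors A N = ∅ := by
  have key : ∀ k, ∀ a ∈ survivors A k, k < φ a := by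
    intro k
    induction k with
    | zero => exact hpos
    | succ k ih =>
      rintro a ⟨hak, hs⟩
      obtain ⟨b, hb, hba⟩ := hdesc _ (survivors_subset A k) a (survivors_subset A k hak) hs
      have := ih b hb
      omega
  exact Set.eq_empty_of_forall_notMem fun a ha =>
    (key N a ha).not_ge (hN a (survivors_subset A N ha))

theorem hasFiniteLevels_of_bounded {A : Set Z2} {c : Z2} (hA : A ⊆ orth)
    (hcA : ∀ x : Z2, c ≤ x → x ∉ A) : HasFiniteLevels A := by
  have hout : ∀ x ∈ A, x.1 < c.1 ∨ x.2 < c.2 := fun x hx => by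
    by_contra! h
    exact hcA x (Prod.le_def.2 h) hx
  refine ⟨c.1.toNat + c.2.toNat, survivors_eq_empty_of_descent
    (φ := fun a => (c.1 - a.1).toNat + (c.2 - a.2).toNat) ?_ ?_ ?_⟩
  · intro a ha
    have := hout a ha
    omega
  · intro E hE a ha h
    rcases h with ⟨b, hb, h1, h2⟩ | ⟨⟨bN, hbN, hN1, hN2⟩, ⟨bE, hbE, hE1, hE2⟩⟩
    · have := hout b (hE hb)
      exact ⟨b, hb, by omega⟩
    · have := hout bN (hE hbN)
      have := hout bE (hE hbE)
      by_cases hN : bN.2 < c.2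
      · exact ⟨bN, hbN, by omega⟩
      · exact ⟨bE, hbE, by omega⟩
  · intro a ha
    have := hA ha
    simp only [orth, Set.mem_ofPred_eq] at this
    omega

theorem NL_le_sum_NL_general (A : Set Z2) (hA : A ⊆ orth)
    (hc : ∃ c ∈ orth, ∀ x : Z2, c ≤ x → x ∉ A)
    (h : ℕ) (B : Fin h → Set Z2)
    (hU : A = ⋃ j, B j) :
    NL A ≤ ∑ j, NL (B j) := by
  obtain ⟨c, -, hcA⟩ := hc
  have hfin : ∀ X ⊆ A, HasFiniteLevels X := fun _ => (hasFiniteLevels_of_bounded hA hcA).mono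
  have hBA : ∀ j, B j ⊆ A := fun j => hU ▸ Set.subset_iUnion B j
  have hmem : ∀ a ∈ A, ∃ j, a ∈ B j := fun a ha => Set.mem_iUnion.1 (hU ▸ ha)
  refine NL_le_of_survivors_eq_empty <|
    survivors_eq_empty_of_descent (φ := fun a => ∑ j, NL (B j ∩ Set.Ici a)) ?_ ?_ ?_
  · intro a ha
    obtain ⟨j, hj⟩ := hmem a ha
    have hpos := NL_pos (hfin _ (Set.inter_subset_left.trans (hBA j))) ⟨hj, Set.self_mem_Ici⟩
    exact hpos.trans_le <| Finset.single_le_sum (f := fun i => NL (B i ∩ Set.Ici a))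
      (fun i _ => Nat.zero_le _) (Finset.mem_univ j)
  · intro E _ a ha hE
    obtain ⟨j, hj⟩ := hmem a ha
    obtain ⟨b, hb, hab, hlt⟩ := hE.exists_NL_inter_Ici_lt (hfin _ (hBA j)) hj
    refine ⟨b, hb, Finset.sum_lt_sum (fun i _ => NL_mono ?_ ?_) ⟨j, Finset.mem_univ j, hlt⟩⟩
    · exact Set.inter_subset_inter_right _ (Set.Ici_subset_Ici.2 hab)
    · exact hfin _ (Set.inter_subset_left.trans (hBA i))
  · exact fun a _ => Finset.sum_le_sum fun j _ =>
      NL_mono Set.inter_subset_left (hfin _ (hBA j))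

/-- If `A ⊆ ℕ²` satisfies `c + ℕ² ⊆ ℕ²∖A` for some
`c ∈ ℕ²` and `A = B₁ ∪ … ∪ B_h` with the `B_j` pairwise disjoint, then
`NL(A) ≤ Σⱼ NL(B_j)`. -/
theorem NL_le_sum_NL (A : Set Z2) (hA : A ⊆ orth)
    (hc : ∃ c ∈ orth, ∀ x : Z2, c ≤ x → x ∉ A)
    (h : ℕ) (B : Fin h → Set Z2)
    (hU : A = ⋃ j, B j)
    (hdisj : ∀ l m, l ≠ m → B l ∩ B m = ∅) :
    NL A ≤ ∑ j, NL (B j) :=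
  NL_le_sum_NL_general A hA hc h B hU
end

section
/- Let S ⊆ ℕ² be a local good semigroup, let I be a relative good ideal of S, and let α ∈ S be such that α+I ⊆ S. Then (α+I) ∪ {0} is a good semigroup; moreover, for every relative good ideal E of S with E ⊆ I, the set α+E is a relative good ideal of the good semigroup (α+I) ∪ {0}. -/
/-! Translation by `α` preserves (G1) and (G3), and `α + I` absorbs `(α + I) ∪ {0}` because
`I` absorbs `S ⊇ α + I`; it contains `α + e + δ + ℕ²` for any `e ∈ I` when `δ + ℕ² ⊆ S`.
Adjoining `0` keeps (G1) since everything is nonnegative, and keeps (G3) because locality of `S`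
forbids an element of `α + I` other than `0` from sharing a coordinate with `0`. -/

section Translate

variable {E : Set Z2}

lemma MinClosed.image_add_left (h : MinClosed E) (a : Z2) : MinClosed ((a + ·) '' E) := by
  rintro _ ⟨x, hx, rfl⟩ _ ⟨y, hy, rfl⟩
  exact ⟨x ⊓ y, h x hx y hy, add_inf x y a⟩

lemma G3P.image_add_left (h : G3P E) (a : Z2) : G3P ((a + ·) '' E) := by
  rintro _ ⟨x, hx, rfl⟩ _ ⟨y, hy, rfl⟩ hne
  obtain ⟨h1, h2⟩ := h x hx y hy (fun hxy => hne (by rw [hxy]))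
  simp only [Prod.fst_add, Prod.snd_add, add_right_inj, Set.exists_mem_image] at *
  constructor
  · intro heq
    obtain ⟨e, he, he1, he2, he3⟩ := h1 heq
    exact ⟨e, he, by omega, by omega, fun hne2 => by have := he3 (by omega); omega⟩
  · intro heq
    obtain ⟨e, he, he1, he2, he3⟩ := h2 heq
    exact ⟨e, he, by omega, by omega, fun hne2 => by have := he3 (by omega); omega⟩

lemma add_mem_image_add_left {S I : Set Z2} {a : Z2} (hE : ∀ x ∈ E, ∀ s ∈ S, x + s ∈ E)
    (haI : ∀ x ∈ I, a + x ∈ S) :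
    ∀ u ∈ (a + ·) '' E, ∀ t ∈ (a + ·) '' I ∪ {0}, u + t ∈ (a + ·) '' E := by
  rintro _ ⟨x, hx, rfl⟩ t (⟨y, hy, rfl⟩ | rfl)
  · exact ⟨x + (a + y), hE x hx _ (haI y hy), (add_assoc a x (a + y)).symm⟩
  · exact ⟨x, hx, (add_zero _).symm⟩

lemma mem_image_add_left_of_le {S I : Set Z2} {a δ e : Z2} (hδ : ∀ y, δ ≤ y → y ∈ S)
    (hI : ∀ x ∈ I, ∀ s ∈ S, x + s ∈ I) (he : e ∈ I) :
    ∀ y, a + e + δ ≤ y → y ∈ (a + ·) '' I := by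
  intro y hy
  have hyS : y - a - e ∈ S := hδ _ (by rw [sub_sub, le_sub_iff_add_le, add_comm]; exact hy)
  exact ⟨e + (y - a - e), hI e he _ hyS, show a + (e + (y - a - e)) = y by abel⟩

end Translate

section AdjoinZero

variable {E : Set Z2}

lemma IsLocal.mono {S : Set Z2} (hS : IsLocal S) (hE : E ⊆ S) : IsLocal E :=
  fun u hu => hS u (hE hu)

lemma add_mem_union_zero (h : ∀ u ∈ E, ∀ v ∈ E ∪ {0}, u + v ∈ E) :
    ∀ u ∈ E ∪ {0}, ∀ v ∈ E ∪ {0}, u + v ∈ E ∪ {0} := by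
  rintro u (hu | rfl) v hv
  · exact Or.inl (h u hu v hv)
  · simpa only [zero_add] using hv

lemma MinClosed.union_zero (h : MinClosed E) (hE : E ⊆ orth) : MinClosed (E ∪ {0}) := by
  rintro u (hu | rfl) v (hv | rfl)
  · exact Or.inl (h u hu v hv)
  · rw [inf_eq_right.2 (hE hu)]; exact Or.inr rfl
  · rw [inf_eq_left.2 (hE hv)]; exact Or.inr rfl
  · rw [inf_idem]; exact Or.inr rfl

lemma G3P.union_zero (h : G3P E) (hl : IsLocal E) : G3P (E ∪ {0}) := by
  have mem : ∀ u ∈ E ∪ {0}, ∀ v ∈ E ∪ {0}, u ≠ v → (u.1 = v.1 ∨ u.2 = v.2) → u ∈ E := by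
    rintro u (hu | rfl) v (hv | rfl) hne hcoord
    · exact hu
    · exact hu
    · have hv0 : v = 0 :=
        hl v hv (by simpa only [Prod.fst_zero, Prod.snd_zero, eq_comm] using hcoord)
      exact absurd hv0.symm hne
    · exact absurd rfl hne
  intro u hu v hv hne
  refine ⟨fun h1 => ?_, fun h2 => ?_⟩
  · obtain ⟨e, he, hee⟩ := (h u (mem u hu v hv hne (.inl h1))
      v (mem v hv u hu hne.symm (.inl h1.symm)) hne).1 h1
    exact ⟨e, Or.inl he, hee⟩
  · obtain ⟨e, he, hee⟩ := (h u (mem u hu v hv hne (.inr h2))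
      v (mem v hv u hu hne.symm (.inr h2.symm)) hne).2 h2
    exact ⟨e, Or.inl he, hee⟩

end AdjoinZero

theorem shift_ideal_good_general (S I : Set Z2) (hS : IsGood S) (hl : IsLocal S)
    (hI : IsRelGoodIdeal S I) (a : Z2) (haI : ∀ x ∈ I, a + x ∈ S) :
    IsGood ((fun x => a + x) '' I ∪ {(0 : Z2)}) ∧
    ∀ E : Set Z2, IsRelGoodIdeal S E → E ⊆ I →
      IsRelGoodIdeal ((fun x => a + x) '' I ∪ {(0 : Z2)}) ((fun x => a + x) '' E) := by
  obtain ⟨hSorth, hS0, -, -, ⟨δ, hδ⟩, -⟩ := hS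
  obtain ⟨⟨e, he⟩, hIabs, -, hImin, hIg3⟩ := hI
  have haIS : (a + ·) '' I ⊆ S := Set.image_subset_iff.2 haI
  have haIorth : (a + ·) '' I ⊆ orth := haIS.trans hSorth
  refine ⟨⟨Set.union_subset haIorth (Set.singleton_subset_iff.2 (hSorth hS0)), Or.inr rfl,
    add_mem_union_zero (add_mem_image_add_left hIabs haI),
    (hImin.image_add_left a).union_zero haIorth,
    ⟨a + e + δ, fun y hy => Or.inl (mem_image_add_left_of_le hδ hIabs he y hy)⟩,
    (hIg3.image_add_left a).union_zero (hl.mono haIS)⟩, ?_⟩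
  rintro E ⟨hEne, hEabs, -, hEmin, hEg3⟩ hEI
  refine ⟨hEne.image _, add_mem_image_add_left hEabs haI,
    ⟨0, Or.inr rfl, fun u hu => Or.inl (by simpa only [zero_add] using Set.image_mono hEI hu)⟩,
    hEmin.image_add_left a, hEg3.image_add_left a⟩

/-- If `I` is a relative good ideal of a local good
semigroup `S ⊆ ℕ²` and `α ∈ S` satisfies `α + I ⊆ S`, then `(α+I) ∪ {0}` is a
good semigroup, and for every relative good ideal `E ⊆ I` of `S` the set
`α + E` is a relative good ideal of `(α+I) ∪ {0}`. -/
theorem shift_ideal_good (S I : Set Z2) (hS : IsGood S) (hl : IsLocal S)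
    (hI : IsRelGoodIdeal S I) (a : Z2) (ha : a ∈ S) (haI : ∀ x ∈ I, a + x ∈ S) :
    IsGood ((fun x => a + x) '' I ∪ {(0 : Z2)}) ∧
    ∀ E : Set Z2, IsRelGoodIdeal S E → E ⊆ I →
      IsRelGoodIdeal ((fun x => a + x) '' I ∪ {(0 : Z2)}) ((fun x => a + x) '' E) :=
  shift_ideal_good_general S I hS hl hI a haI
end
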